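/- arXiv:math/0510044 — 3 statements merged into one kernel-verified Lean document; each statement's English description precedes it below -/
import Mathlib

section
/- If a permutation class C contains only finitely many simple permutations, then C is finitely based (there exists a finite set B of permutations with C = Av(B)) and C is partially well-ordered under pattern containment (C contains no infinite antichain; that is, every set of pairwise incomparable permutations in C is finite). -/
/-- A permutation of arbitrary length: a length `n` together with a
bijection of `Fin n` (0-indexed positions and values). -/
abbrev PermAny : Type := Σ n : ℕ, Equiv.Perm (Fin n)

/-- `β` is contained as a pattern in `π`. -/
def ContainsPat {k n : ℕ} (β : Equiv.Perm (Fin k)) (π : Equiv.Perm (Fin n)) : Prop :=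
  ∃ f : Fin k → Fin n, StrictMono f ∧ ∀ a b : Fin k, β a < β b ↔ π (f a) < π (f b)

/-- `Av(B)`: the permutations avoiding every member of `B`. -/
def AvSet (B : Set PermAny) : Set PermAny :=
  {p | ∀ b ∈ B, ¬ ContainsPat b.2 p.2}

/-- A permutation class: closed downwards under pattern containment. -/
def IsPermClass (C : Set PermAny) : Prop :=
  ∀ p ∈ C, ∀ q : PermAny, ContainsPat q.2 p.2 → q ∈ C

/-- The positions `a,…,b` form an interval of `π`: the corresponding values
form a set of consecutive integers. -/
def IsIntervalAt {n : ℕ} (π : Equiv.Perm (Fin n)) (a b : Fin n) : Prop :=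
  a ≤ b ∧ ∃ c : ℕ,
    (Finset.Icc a b).image (fun i => (π i : ℕ)) = Finset.Icc c (c + ((b : ℕ) - (a : ℕ)))

/-- A permutation is simple when all of its intervals are trivial. -/
def IsSimplePerm {n : ℕ} (π : Equiv.Perm (Fin n)) : Prop :=
  ∀ a b : Fin n, IsIntervalAt π a b → a = b ∨ ((a : ℕ) = 0 ∧ (b : ℕ) = n - 1)

/-- `Z(B;π;g)`: the set of `B`-avoiding permutations of length `k + ‖g‖` whose
`k` smallest values occupy the positions prescribed by the gap vector `g`
and form the pattern `π`.  (0-indexed: entry `π r` sits at position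
`g 0 + ⋯ + g r + r`.) -/
def ZSet (B : Set PermAny) {k : ℕ} (π : Equiv.Perm (Fin k)) (g : Fin (k + 1) → ℕ) :
    Set (Equiv.Perm (Fin (k + ∑ j, g j))) :=
  {p | (⟨k + ∑ j, g j, p⟩ : PermAny) ∈ AvSet B ∧
    ∀ r : Fin k, ∀ i : Fin (k + ∑ j, g j),
      (i : ℕ) = (∑ j ∈ Finset.univ.filter fun j : Fin (k + 1) => (j : ℕ) ≤ (r : ℕ), g j)
          + (r : ℕ) →
      (p i : ℕ) = (π r : ℕ)}

/-- `J(π)`: the set of gap positions `j` such that `Z(B;π;g)` is empty whenever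
`g j > 0`. -/
def JSet (B : Set PermAny) {k : ℕ} (π : Equiv.Perm (Fin k)) : Set (Fin (k + 1)) :=
  {j | ∀ g : Fin (k + 1) → ℕ, 0 < g j → ZSet B π g = ∅}

/-- `d_r(π)`: delete the entry at position `r` from `π` and standardize. -/
def delEntry {k : ℕ} (π : Equiv.Perm (Fin (k + 1))) (r : Fin (k + 1)) : Equiv.Perm (Fin k) :=
  Equiv.removeNone ((finSuccEquiv' r).symm.trans (π.trans (finSuccEquiv' (π r))))

/-- `d_r(g)`: merge the gaps on either side of position `r`. -/
def delGap {k : ℕ} (g : Fin (k + 2) → ℕ) (r : Fin (k + 1)) : Fin (k + 1) → ℕ :=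
  fun j =>
    if (j : ℕ) < (r : ℕ) then g (Fin.castSucc j)
    else if (j : ℕ) = (r : ℕ) then g (Fin.castSucc j) + g j.succ
    else g j.succ

/-- The entry `π r` is ES-reducible for `π` with respect to `B`
(Zeilberger's original notion). -/
def ESRed (B : Set PermAny) {k : ℕ} (π : Equiv.Perm (Fin (k + 1))) (r : Fin (k + 1)) : Prop :=
  ∀ g : Fin (k + 2) → ℕ, (∀ j ∈ JSet B π, g j = 0) →
    (ZSet B π g).ncard = (ZSet B (delEntry π r) (delGap g r)).ncard

/-- The entry `π r` is ES⁺-reducible for `π` with respect to `B`. -/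
def ESPlusRed (B : Set PermAny) {k : ℕ} (π : Equiv.Perm (Fin (k + 1))) (r : Fin (k + 1)) : Prop :=
  ∀ g : Fin (k + 2) → ℕ, (ZSet B π g).Nonempty →
    (ZSet B π g).ncard = (ZSet B (delEntry π r) (delGap g r)).ncard

/-- `G_r(π)`: the largest lower order ideal of gap vectors `g` such that for all
`h ≤ g`, either `Z(B;π;h)` is nonempty or `Z(B;d_r(π);d_r(h))` is empty. -/
def GrSet (B : Set PermAny) {k : ℕ} (π : Equiv.Perm (Fin (k + 1))) (r : Fin (k + 1)) :
    Set (Fin (k + 2) → ℕ) :=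
  {g | ∀ h : Fin (k + 2) → ℕ, h ≤ g →
    (ZSet B π h).Nonempty ∨ ZSet B (delEntry π r) (delGap h r) = ∅}

namespace AA
open Set Equiv

abbrev CP (p q : PermAny) : Prop := ContainsPat p.2 q.2

lemma cp_refl (p : PermAny) : CP p p := ⟨id, strictMono_id, fun _ _ => Iff.rfl⟩

lemma containsPat_trans {k m n : ℕ} {α : Equiv.Perm (Fin k)} {β : Equiv.Perm (Fin m)}
    {γ : Equiv.Perm (Fin n)} (h1 : ContainsPat α β) (h2 : ContainsPat β γ) : ContainsPat α γ := by
  obtain ⟨f, hf, hfo⟩ := h1; obtain ⟨g, hg, hgo⟩ := h2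
  exact ⟨g ∘ f, hg.comp hf, fun a b => (hfo a b).trans (hgo (f a) (f b))⟩

lemma cp_trans {p q r : PermAny} : CP p q → CP q r → CP p r := containsPat_trans

lemma length_le_of_cp {p q : PermAny} (h : CP p q) : p.1 ≤ q.1 := by
  obtain ⟨f, hf, -⟩ := h
  simpa using Fintype.card_le_of_injective f hf.injective

lemma strictMono_fin_id {n : ℕ} {f : Fin n → Fin n} (hf : StrictMono f) : f = id := by
  have hsurj : Function.Surjective f := Finite.surjective_of_injective hf.injective
  have h : Set.range f = Set.range (id : Fin n → Fin n) := by
    simpa [Set.range_id] using hsurj.range_eq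
  exact (hf.range_inj strictMono_id).mp h

lemma perm_eq_of_forall_lt_iff {n : ℕ} {β π : Equiv.Perm (Fin n)}
    (h : ∀ a b, β a < β b ↔ π a < π b) : β = π := by
  have h2 : StrictMono (fun a => π (β.symm a)) := by
    intro a b hab
    have := (h (β.symm a) (β.symm b)).mp (by simpa using hab)
    simpa using this
  have h3 := strictMono_fin_id h2
  ext a
  have := congrFun h3 (β a)
  simpa using (congrArg Fin.val this).symm

lemma eq_of_cp_of_len_eq {p q : PermAny} (hl : p.1 = q.1) (h : CP p q) : p = q := by
  obtain ⟨m, β⟩ := p; obtain ⟨n, π⟩ := q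
  simp only at hl; subst hl
  obtain ⟨f, hf, hfo⟩ := h
  have h3 := strictMono_fin_id hf
  subst h3
  have : β = π := perm_eq_of_forall_lt_iff (by simpa using hfo)
  simp [this]

lemma finite_len_le (N : ℕ) : {p : PermAny | p.1 ≤ N}.Finite := by
  have h : {p : PermAny | p.1 ≤ N} ⊆
      ⋃ n ∈ Finset.range (N+1), (fun π : Equiv.Perm (Fin n) => (⟨n, π⟩ : PermAny)) '' Set.univ := by
    rintro ⟨n, π⟩ hp
    simp only [Set.mem_iUnion]
    exact ⟨n, by simpa using Nat.lt_succ_of_le hp, π, trivial, rfl⟩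
  exact Set.Finite.subset (Set.Finite.biUnion (Finset.range (N+1)).finite_toSet
    (fun n _ => (Set.finite_univ).image _)) h

lemma cp_of_len_zero {p q : PermAny} (h : p.1 = 0) : CP p q := by
  refine ⟨fun i => absurd i.2 (by omega), ?_, ?_⟩
  · intro a b _; exact absurd a.2 (by omega)
  · intro a b; exact absurd a.2 (by omega)

lemma cp_of_len_one {p q : PermAny} (h : p.1 = 1) (h2 : 1 ≤ q.1) : CP p q := by
  refine ⟨fun _ => ⟨0, h2⟩, ?_, ?_⟩
  · intro a b hab; have ha := a.2; have hb := b.2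
    exact absurd (Fin.lt_def.mp hab) (by omega)
  · intro a b
    have ha := (p.2 a).2; have hb := (p.2 b).2
    constructor
    · intro hh; exact absurd (Fin.lt_def.mp hh) (by omega)
    · intro hh; exact absurd hh (lt_irrefl _)

noncomputable def rankPerm {k : ℕ} (v : Fin k → ℕ) (hv : Function.Injective v) :
    Equiv.Perm (Fin k) := by
  have hcard : (Finset.image v Finset.univ).card = k := by
    rw [Finset.card_image_of_injective _ hv, Finset.card_univ, Fintype.card_fin]
  exact Equiv.ofBijective
    (fun i => ((Finset.image v Finset.univ).orderIsoOfFin hcard).symm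
      ⟨v i, by simp⟩)
    (by
      have hinj : Function.Injective (fun i =>
          ((Finset.image v Finset.univ).orderIsoOfFin hcard).symm
            (⟨v i, by simp⟩ : {x // x ∈ Finset.image v Finset.univ})) := by
        intro a b hab
        have := (((Finset.image v Finset.univ).orderIsoOfFin hcard).symm.injective hab)
        exact hv (by simpa using congrArg Subtype.val this)
      exact (Finite.injective_iff_bijective).mp hinj)

lemma rankPerm_lt_iff {k : ℕ} (v : Fin k → ℕ) (hv : Function.Injective v) (i j : Fin k) :
    rankPerm v hv i < rankPerm v hv j ↔ v i < v j := by
  simp only [rankPerm, Equiv.ofBijective_apply]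
  rw [OrderIso.lt_iff_lt]
  rfl

/-- The conditions making `e` an inflation structure. -/
def InflConds {k : ℕ} (σ : Equiv.Perm (Fin k)) (β : Fin k → PermAny) (q : PermAny)
    (e : ∀ j : Fin k, Fin (β j).1 → Fin q.1) : Prop :=
    (∀ j, 0 < (β j).1) ∧
    (∀ j, StrictMono (e j)) ∧
    (∀ (j j' : Fin k) i i', j < j' → e j i < e j' i') ∧
    (∀ x : Fin q.1, ∃ j i, e j i = x) ∧
    (∀ j i i', (β j).2 i < (β j).2 i' ↔ q.2 (e j i) < q.2 (e j i')) ∧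
    (∀ j j' i i', j ≠ j' → (σ j < σ j' ↔ q.2 (e j i) < q.2 (e j' i')))

/-- Semantic version of "q is the inflation of σ by the blocks β". -/
def IsInfl {k : ℕ} (σ : Equiv.Perm (Fin k)) (β : Fin k → PermAny) (q : PermAny) : Prop :=
  ∃ e : ∀ j : Fin k, Fin (β j).1 → Fin q.1, InflConds σ β q e

lemma IsInfl.block_le {k : ℕ} {σ : Equiv.Perm (Fin k)} {β : Fin k → PermAny} {q : PermAny}
    (h : IsInfl σ β q) (j : Fin k) : CP (β j) q := by
  obtain ⟨e, _, hmono, _, _, hval, _⟩ := h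
  exact ⟨e j, hmono j, hval j⟩

lemma IsInfl.quot_le {k : ℕ} {σ : Equiv.Perm (Fin k)} {β : Fin k → PermAny} {q : PermAny}
    (h : IsInfl σ β q) : CP ⟨k, σ⟩ q := by
  obtain ⟨e, hpos, hmono, hcross, _, _, hcval⟩ := h
  refine ⟨fun j => e j ⟨0, hpos j⟩, ?_, ?_⟩
  · intro a b hab; exact hcross a b _ _ hab
  · intro a b
    rcases eq_or_ne a b with rfl | hne
    · simp
    · exact hcval a b _ _ hne

lemma IsInfl.block_len_lt {k : ℕ} {σ : Equiv.Perm (Fin k)} {β : Fin k → PermAny} {q : PermAny}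
    (h : IsInfl σ β q) (hk : 2 ≤ k) (j : Fin k) : (β j).1 < q.1 := by
  obtain ⟨e, hpos, hmono, hcross, _, _, _⟩ := h
  obtain ⟨j', hj'⟩ : ∃ j' : Fin k, j' ≠ j := by
    rcases eq_or_ne j ⟨0, by omega⟩ with rfl | hne
    · exact ⟨⟨1, by omega⟩, by simp [Fin.ext_iff]⟩
    · exact ⟨⟨0, by omega⟩, fun hc => hne hc.symm⟩
  have hnotmem : e j' ⟨0, hpos j'⟩ ∉ Set.range (e j) := by
    rintro ⟨i, hi⟩
    rcases lt_or_gt_of_ne hj' with hlt | hlt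
    · exact absurd hi.symm (ne_of_lt (hcross j' j _ _ hlt))
    · exact absurd hi (ne_of_lt (hcross j j' _ _ hlt))
  have := Fintype.card_lt_of_injective_of_notMem (e j) (hmono j).injective hnotmem
  simpa using this

lemma dapp_congr {k : ℕ} {γ : Type*} {m : Fin k → ℕ} (e : ∀ j, Fin (m j) → γ)
    {j j' : Fin k} (h : j = j') {i : Fin (m j)} {i' : Fin (m j')}
    (hi : (i : ℕ) = (i' : ℕ)) : e j i = e j' i' := by
  subst h; rw [show i = i' from Fin.ext hi]

lemma dapp_val_congr {k : ℕ} {m m' : Fin k → ℕ} (g : ∀ j, Fin (m j) → Fin (m' j))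
    {j j' : Fin k} (h : j = j') {i : Fin (m j)} {i' : Fin (m j')}
    (hi : (i : ℕ) = (i' : ℕ)) : ((g j i : Fin (m' j)) : ℕ) = ((g j' i' : Fin (m' j')) : ℕ) := by
  subst h; rw [show i = i' from Fin.ext hi]

lemma IsInfl.mono {k : ℕ} {σ : Equiv.Perm (Fin k)} {β β' : Fin k → PermAny} {q q' : PermAny}
    (h : IsInfl σ β q) (h' : IsInfl σ β' q') (hb : ∀ j, CP (β j) (β' j)) : CP q q' := by
  obtain ⟨e, hpos, hmono, hcross, hcover, hval, hcval⟩ := h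
  obtain ⟨e', hpos', hmono', hcross', hcover', hval', hcval'⟩ := h'
  choose J I hJI using hcover
  choose g hg hgo using hb
  have huj : ∀ (j j' : Fin k) i i', e j i = e j' i' → j = j' := by
    intro j j' i i' hee
    rcases lt_trichotomy j j' with hlt | heq | hlt
    · exact absurd hee (ne_of_lt (hcross _ _ _ _ hlt))
    · exact heq
    · exact absurd hee.symm (ne_of_lt (hcross _ _ _ _ hlt))
  have hIval : ∀ (x : Fin q.1) (j : Fin k) (i : Fin (β j).1), e j i = x →
      J x = j ∧ (I x : ℕ) = (i : ℕ) := by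
    intro x j i hx
    have h1 : J x = j := huj _ _ _ _ ((hJI x).trans hx.symm)
    subst h1
    have h2 : I x = i := (hmono (J x)).injective ((hJI x).trans hx.symm)
    exact ⟨rfl, by rw [h2]⟩
  refine ⟨fun x => e' (J x) (g (J x) (I x)), ?_, ?_⟩
  · intro x y hxy
    show e' (J x) (g (J x) (I x)) < e' (J y) (g (J y) (I y))
    rcases eq_or_ne (J x) (J y) with hJ | hJ
    · obtain ⟨iy, hiy⟩ : ∃ i' : Fin (β (J x)).1, e (J x) i' = y := by
        rw [hJ]; exact ⟨I y, hJI y⟩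
      have hvy : (I y : ℕ) = (iy : ℕ) := (hIval y (J x) iy hiy).2
      have hFy : e' (J y) (g (J y) (I y)) = e' (J x) (g (J x) iy) :=
        dapp_congr e' hJ.symm (dapp_val_congr g hJ.symm hvy)
      rw [hFy]
      have hixy : I x < iy := by
        have := (hmono (J x)).lt_iff_lt (a := I x) (b := iy)
        rw [hJI x, hiy] at this
        exact this.mp hxy
      exact (hmono' (J x)) ((hg (J x)) hixy)
    · have hJlt : J x < J y := by
        rcases lt_or_gt_of_ne hJ with hlt | hlt
        · exact hlt
        · exact absurd ((hcross _ _ (I y) (I x) hlt).trans_eq (hJI x))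
            (by rw [hJI y]; exact not_lt.mpr hxy.le)
      exact hcross' _ _ _ _ hJlt
  · intro x y
    show q.2 x < q.2 y ↔ q'.2 (e' (J x) (g (J x) (I x))) < q'.2 (e' (J y) (g (J y) (I y)))
    rcases eq_or_ne (J x) (J y) with hJ | hJ
    · obtain ⟨iy, hiy⟩ : ∃ i' : Fin (β (J x)).1, e (J x) i' = y := by
        rw [hJ]; exact ⟨I y, hJI y⟩
      have hvy : (I y : ℕ) = (iy : ℕ) := (hIval y (J x) iy hiy).2
      have hFy : e' (J y) (g (J y) (I y)) = e' (J x) (g (J x) iy) :=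
        dapp_congr e' hJ.symm (dapp_val_congr g hJ.symm hvy)
      rw [hFy]
      have h1 : q.2 x < q.2 y ↔ (β (J x)).2 (I x) < (β (J x)).2 iy := by
        have h2 := hval (J x) (I x) iy
        rw [hJI x, hiy] at h2
        exact h2.symm
      rw [h1, hgo (J x), ← hval' (J x)]
    · have h1 : q.2 x < q.2 y ↔ σ (J x) < σ (J y) := by
        conv_lhs => rw [← hJI x, ← hJI y]
        exact (hcval (J x) (J y) (I x) (I y) hJ).symm
      rw [h1, hcval' (J x) (J y) _ _ hJ]

section Sys
variable {n : ℕ} (p : Equiv.Perm (Fin n))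

/-- `s` cuts `[0,n)` into `k` blocks, each of which is an interval of `p`
with value window starting at `c j`. -/
def SysOK (k : ℕ) (s c : ℕ → ℕ) : Prop :=
  (∀ j, j < k → s j < s (j+1)) ∧ s 0 = 0 ∧ s k = n ∧
  ∀ j, j < k → ∀ i : Fin n,
    (s j ≤ (i : ℕ) ∧ (i : ℕ) < s (j+1)) ↔
      (c j ≤ (p i : ℕ) ∧ (p i : ℕ) < c j + (s (j+1) - s j))

variable {p} {k : ℕ} {s c : ℕ → ℕ} (hS : SysOK p k s c)
include hS

lemma sys_le {j j' : ℕ} (h : j ≤ j') (h' : j' ≤ k) : s j ≤ s j' := by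
  induction j' with
  | zero => simpa [Nat.le_zero.mp h]
  | succ m ih =>
    rcases Nat.lt_or_ge j (m+1) with hlt | hge
    · exact le_trans (ih (by omega) (by omega)) (le_of_lt (hS.1 m (by omega)))
    · have : j = m + 1 := by omega
      simp [this]

lemma sys_pos_lt_n {j : ℕ} (h : j < k) : s (j+1) ≤ n := by
  have := sys_le hS (show j+1 ≤ k by omega) (le_refl k)
  rw [hS.2.2.1] at this
  exact this

lemma sys_cover_aux : ∀ t, t ≤ k → ∀ x : ℕ, x < s t → ∃ j, j < t ∧ s j ≤ x ∧ x < s (j+1) := by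
  intro t
  induction t with
  | zero => intro _ x hx; rw [hS.2.1] at hx; omega
  | succ m ih =>
    intro hm x hx
    rcases Nat.lt_or_ge x (s m) with hlt | hge
    · obtain ⟨j, hj⟩ := ih (by omega) x hlt
      exact ⟨j, by omega, hj.2⟩
    · exact ⟨m, by omega, hge, hx⟩

lemma sys_cover (i : Fin n) : ∃ j, j < k ∧ s j ≤ (i : ℕ) ∧ (i : ℕ) < s (j+1) :=
  sys_cover_aux hS k (le_refl k) i (by rw [hS.2.2.1]; exact i.2)

lemma sys_window (j : ℕ) (h : j < k) (i : Fin n) (h1 : s j ≤ (i : ℕ)) (h2 : (i : ℕ) < s (j+1)) :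
    c j ≤ (p i : ℕ) ∧ (p i : ℕ) < c j + (s (j+1) - s j) :=
  (hS.2.2.2 j h i).mp ⟨h1, h2⟩

lemma sys_c_lt_n (j : ℕ) (h : j < k) : c j < n := by
  have hjn : s j < n := by
    have h1 := hS.1 j h
    have h2 := sys_pos_lt_n hS h
    omega
  have := sys_window hS j h ⟨s j, hjn⟩ (le_refl _) (by simpa using hS.1 j h)
  have hv := (p ⟨s j, hjn⟩).2
  omega

/-- value decoding: every value lies in some window -/
lemma sys_val_cover (v : ℕ) (hv : v < n) : ∃ j, j < k ∧ c j ≤ v ∧ v < c j + (s (j+1) - s j) := by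
  obtain ⟨j, hj, h1, h2⟩ := sys_cover hS (p.symm ⟨v, hv⟩)
  refine ⟨j, hj, ?_⟩
  have := sys_window hS j hj (p.symm ⟨v, hv⟩) h1 h2
  simpa using this

/-- block decoding of a value in a window -/
lemma sys_pos_of_window (j : ℕ) (h : j < k) (v : ℕ) (hv : v < n)
    (h1 : c j ≤ v) (h2 : v < c j + (s (j+1) - s j)) :
    s j ≤ ((p.symm ⟨v, hv⟩ : Fin n) : ℕ) ∧ ((p.symm ⟨v, hv⟩ : Fin n) : ℕ) < s (j+1) := by
  apply (hS.2.2.2 j h _).mpr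
  simpa using ⟨h1, h2⟩

lemma sys_block_disj {j j' : ℕ} (h : j < k) (h' : j' < k) (hne : j ≠ j') (x : ℕ)
    (h1 : s j ≤ x) (h2 : x < s (j+1)) (h1' : s j' ≤ x) (h2' : x < s (j'+1)) : False := by
  rcases Nat.lt_or_ge j j' with hlt | hge
  · have := sys_le hS (show j+1 ≤ j' by omega) (by omega)
    omega
  · have := sys_le hS (show j'+1 ≤ j by omega) (by omega)
    omega

lemma sys_align {j j' : ℕ} (h : j < k) (h' : j' < k) (hc : c j < c j') :
    c j + (s (j+1) - s j) ≤ c j' := by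
  by_contra hcon
  push_neg at hcon
  have hv : c j' < n := sys_c_lt_n hS j' h'
  have hL' : 0 < s (j'+1) - s j' := by have := hS.1 j' h'; omega
  have hin' := sys_pos_of_window hS j' h' (c j') hv (le_refl _) (by omega)
  have hin := sys_pos_of_window hS j h (c j') hv (le_of_lt hc) hcon
  exact sys_block_disj hS h h' (by intro hjj; rw [hjj] at hc; omega) _ hin.1 hin.2 hin'.1 hin'.2

lemma sys_c_inj {j j' : ℕ} (h : j < k) (h' : j' < k) (hc : c j = c j') : j = j' := by
  by_contra hne
  have hv : c j' < n := sys_c_lt_n hS j' h'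
  have hL : 0 < s (j+1) - s j := by have := hS.1 j h; omega
  have hL' : 0 < s (j'+1) - s j' := by have := hS.1 j' h'; omega
  have hin' := sys_pos_of_window hS j' h' (c j') hv (le_refl _) (by omega)
  have hin := sys_pos_of_window hS j h (c j') hv (by omega) (by omega)
  exact sys_block_disj hS h h' hne _ hin.1 hin.2 hin'.1 hin'.2

end Sys
lemma gapfree {S : Finset ℕ} (hne : S.Nonempty)
    (hgf : ∀ u ∈ S, ∀ v ∈ S, ∀ z, u ≤ z → z ≤ v → z ∈ S) :
    ∀ z, z ∈ S ↔ S.min' hne ≤ z ∧ z < S.min' hne + S.card := by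
  have hIcc : S = Finset.Icc (S.min' hne) (S.max' hne) := by
    apply Finset.Subset.antisymm
    · intro z hz
      exact Finset.mem_Icc.mpr ⟨S.min'_le z hz, S.le_max' z hz⟩
    · intro z hz
      rw [Finset.mem_Icc] at hz
      exact hgf _ (S.min'_mem hne) _ (S.max'_mem hne) z hz.1 hz.2
  have hminmax : S.min' hne ≤ S.max' hne := S.min'_le _ (S.max'_mem hne)
  have hcard : S.card = S.max' hne - S.min' hne + 1 := by
    conv_lhs => rw [hIcc]
    rw [Nat.card_Icc]
    omega
  intro z
  conv_lhs => rw [hIcc]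
  rw [Finset.mem_Icc]
  omega


theorem exists_decomp' (q : PermAny) (h2 : 2 ≤ q.1) :
    ∃ (k : ℕ) (σ : Equiv.Perm (Fin k)) (β : Fin k → PermAny) (s : ℕ → ℕ)
      (e : ∀ j : Fin k, Fin (β j).1 → Fin q.1),
      2 ≤ k ∧ IsSimplePerm σ ∧
      (∀ j, j < k → s j < s (j+1)) ∧ s 0 = 0 ∧ s k = q.1 ∧
      (∀ j : Fin k, (β j).1 = s (j.1+1) - s j.1) ∧
      (∀ (j : Fin k) (i : Fin (β j).1), (e j i : ℕ) = s j.1 + i.1) ∧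
      InflConds σ β q e := by
  obtain ⟨n, p⟩ := q
  simp only at h2
  have hbase : ∃ k, 2 ≤ k ∧ ∃ s c, SysOK p k s c := by
    refine ⟨n, h2, (fun j => j), (fun j => if h : j < n then ((p ⟨j, h⟩ : Fin n) : ℕ) else 0),
      fun j _ => by simp, rfl, rfl, ?_⟩
    intro j hj i
    dsimp only
    rw [dif_pos hj]
    constructor
    · rintro ⟨hj1, hj2⟩
      have : i = ⟨j, hj⟩ := Fin.ext (by simpa using (by omega : (i:ℕ) = j))
      subst this
      omega
    · rintro ⟨hj1, hj2⟩
      have : p i = p ⟨j, hj⟩ := Fin.ext (by omega)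
      have : i = ⟨j, hj⟩ := p.injective this
      subst this
      simp
  classical
  set K := Nat.find hbase with hKdef
  obtain ⟨hK2, s, c, hS⟩ := Nat.find_spec hbase
  have hmin : ∀ k', k' < K → ¬(2 ≤ k' ∧ ∃ s c, SysOK p k' s c) := fun k' hk' => Nat.find_min hbase hk'
  -- basic facts
  have hLpos : ∀ j, j < K → 0 < s (j+1) - s j := fun j hj => by have := hS.1 j hj; omega
  have hsub : ∀ (j : Fin K) (i : Fin (s (j.1+1) - s j.1)), s j.1 + i.1 < n := by
    intro j i
    have h1 := hS.1 j.1 j.2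
    have h2 := sys_pos_lt_n hS j.2
    have := i.2
    omega
  -- the quotient permutation
  have hcinj : Function.Injective (fun j : Fin K => c j.1) := by
    intro a b hab
    exact Fin.ext (sys_c_inj hS a.2 b.2 hab)
  set σ := rankPerm (fun j : Fin K => c j.1) hcinj with hσdef
  have hσlt : ∀ a b : Fin K, σ a < σ b ↔ c a.1 < c b.1 := fun a b => rankPerm_lt_iff _ hcinj a b
  -- the blocks
  have hwin : ∀ (j : Fin K) (i : Fin (s (j.1+1) - s j.1)),
      c j.1 ≤ (p ⟨s j.1 + i.1, hsub j i⟩ : ℕ) ∧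
      (p ⟨s j.1 + i.1, hsub j i⟩ : ℕ) < c j.1 + (s (j.1+1) - s j.1) := by
    intro j i
    exact sys_window hS j.1 j.2 _ (by simp) (by have := i.2; simp; omega)
  have hbinj : ∀ j : Fin K, Function.Injective
      (fun i : Fin (s (j.1+1) - s j.1) => (⟨(p ⟨s j.1 + i.1, hsub j i⟩ : ℕ) - c j.1, by
        have := hwin j i; omega⟩ : Fin (s (j.1+1) - s j.1))) := by
    intro j a b hab
    have h1 := hwin j a
    have h2 := hwin j b
    have hv : (p ⟨s j.1 + a.1, hsub j a⟩ : ℕ) = (p ⟨s j.1 + b.1, hsub j b⟩ : ℕ) := by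
      have := congrArg Fin.val hab
      simp only at this
      omega
    have := p.injective (Fin.ext hv)
    have := congrArg Fin.val this
    simp only at this
    exact Fin.ext (by omega)
  refine ⟨K, σ, fun j =>
    ⟨s (j.1+1) - s j.1, Equiv.ofBijective _ ((Finite.injective_iff_bijective).mp (hbinj j))⟩,
    s, fun j i => ⟨s j.1 + i.1, hsub j i⟩,
    hK2, ?_, hS.1, hS.2.1, hS.2.2.1, fun j => rfl, fun j i => rfl, ?_⟩
  · -- simplicity of the quotient
    intro a b hint
    by_contra hcon
    push_neg at hcon
    obtain ⟨hne, hcon2⟩ := hcon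
    obtain ⟨hab, w, himg⟩ := hint
    have hbK := b.2
    have haK := a.2
    have hAB : a.1 < b.1 := by
      have h1 : a.1 ≤ b.1 := hab
      have h2 : a.1 ≠ b.1 := fun h => hne (Fin.ext h)
      omega
    have hsb1 : s (b.1+1) ≤ n := sys_pos_lt_n hS b.2
    have hsalt : s a.1 < s (b.1+1) := by
      have h1 := hS.1 a.1 a.2
      have h2 := sys_le hS (show a.1+1 ≤ b.1+1 by omega) (by omega)
      omega
    set V : Finset ℕ := (Finset.Ico (s a.1) (s (b.1+1))).image
      (fun x => if h : x < n then ((p ⟨x, h⟩ : Fin n) : ℕ) else 0) with hVdef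
    have hVmem : ∀ z, z ∈ V ↔
        ∃ (x : ℕ) (hx : x < n), s a.1 ≤ x ∧ x < s (b.1+1) ∧ ((p ⟨x, hx⟩ : Fin n) : ℕ) = z := by
      intro z
      rw [hVdef, Finset.mem_image]
      constructor
      · rintro ⟨x, hx, hpx⟩
        rw [Finset.mem_Ico] at hx
        have hxn : x < n := by omega
        rw [dif_pos hxn] at hpx
        exact ⟨x, hxn, hx.1, hx.2, hpx⟩
      · rintro ⟨x, hxn, h1, h2, hpx⟩
        exact ⟨x, Finset.mem_Ico.mpr ⟨h1, h2⟩, by rw [dif_pos hxn]; exact hpx⟩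
    have hVcard : V.card = s (b.1+1) - s a.1 := by
      rw [hVdef, Finset.card_image_of_injOn, Nat.card_Ico]
      intro x hx y hy hxy
      rw [Finset.mem_coe, Finset.mem_Ico] at hx hy
      have hxn : x < n := by omega
      have hyn : y < n := by omega
      dsimp only at hxy
      rw [dif_pos hxn, dif_pos hyn] at hxy
      have := p.injective (Fin.ext hxy)
      exact congrArg Fin.val this
    have hVne : V.Nonempty :=
      ⟨((p ⟨s a.1, by omega⟩ : Fin n) : ℕ),
        (hVmem _).mpr ⟨s a.1, by omega, le_refl _, hsalt, rfl⟩⟩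
    have hσval : ∀ (j j' : Fin K), c j.1 ≤ c j'.1 → (σ j : ℕ) ≤ (σ j' : ℕ) := by
      intro j j' h
      by_contra hcc
      push_neg at hcc
      have := (hσlt j' j).mp (Fin.lt_def.mpr hcc)
      omega
    have hrank : ∀ (j : Fin K), a ≤ j → j ≤ b → w ≤ (σ j : ℕ) ∧ (σ j : ℕ) ≤ w + (b.1 - a.1) := by
      intro j h1 h2
      have hmem : (σ j : ℕ) ∈ (Finset.Icc a b).image (fun i => ((σ i : Fin K) : ℕ)) :=
        Finset.mem_image_of_mem _ (Finset.mem_Icc.mpr ⟨h1, h2⟩)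
      rw [himg, Finset.mem_Icc] at hmem
      exact hmem
    have hrank_inv : ∀ t, w ≤ t → t ≤ w + (b.1 - a.1) →
        ∃ j : Fin K, a ≤ j ∧ j ≤ b ∧ (σ j : ℕ) = t := by
      intro t h1 h2
      have hmem : t ∈ (Finset.Icc a b).image (fun i => ((σ i : Fin K) : ℕ)) := by
        rw [himg, Finset.mem_Icc]; exact ⟨h1, h2⟩
      rw [Finset.mem_image] at hmem
      obtain ⟨j, hj, hjt⟩ := hmem
      rw [Finset.mem_Icc] at hj
      exact ⟨j, hj.1, hj.2, hjt⟩
    have hblk : ∀ (x : ℕ), s a.1 ≤ x → x < s (b.1+1) →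
        ∃ j, a.1 ≤ j ∧ j ≤ b.1 ∧ j < K ∧ s j ≤ x ∧ x < s (j+1) := by
      intro x h1 h2
      obtain ⟨j, hj, hj1, hj2⟩ := sys_cover_aux hS K (le_refl K) x (by rw [hS.2.2.1]; omega)
      refine ⟨j, ?_, ?_, hj, hj1, hj2⟩
      · by_contra hcc; push_neg at hcc
        have := sys_le hS (show j+1 ≤ a.1 by omega) (by omega)
        omega
      · by_contra hcc; push_neg at hcc
        have := sys_le hS (show b.1+1 ≤ j by omega) (by omega)
        omega
    have hgf : ∀ u ∈ V, ∀ v ∈ V, ∀ z, u ≤ z → z ≤ v → z ∈ V := by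
      intro u hu v hv z h1 h2
      obtain ⟨xu, hxu, hau, hbu, hpu⟩ := (hVmem u).mp hu
      obtain ⟨xv, hxv, hav, hbv, hpv⟩ := (hVmem v).mp hv
      have hzn : z < n := by
        have := (p ⟨xv, hxv⟩).2
        omega
      obtain ⟨ju, hju1, hju2, hju, hsu1, hsu2⟩ := hblk xu hau hbu
      obtain ⟨jv, hjv1, hjv2, hjv, hsv1, hsv2⟩ := hblk xv hav hbv
      obtain ⟨jz, hjz, hcz1, hcz2⟩ := sys_val_cover hS z hzn
      have hwu := sys_window hS ju hju ⟨xu, hxu⟩ hsu1 hsu2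
      have hwv := sys_window hS jv hjv ⟨xv, hxv⟩ hsv1 hsv2
      rw [hpu] at hwu
      rw [hpv] at hwv
      have hc1 : c ju ≤ c jz := by
        by_contra hcc; push_neg at hcc
        have := sys_align hS hjz hju hcc
        omega
      have hc2 : c jz ≤ c jv := by
        by_contra hcc; push_neg at hcc
        have := sys_align hS hjv hjz hcc
        omega
      have hru := hrank ⟨ju, hju⟩ (by exact hju1) (by exact hju2)
      have hrv := hrank ⟨jv, hjv⟩ (by exact hjv1) (by exact hjv2)
      have hzu := hσval ⟨ju, hju⟩ ⟨jz, hjz⟩ hc1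
      have hzv := hσval ⟨jz, hjz⟩ ⟨jv, hjv⟩ hc2
      obtain ⟨j', hj'1, hj'2, hj'3⟩ := hrank_inv ((σ ⟨jz, hjz⟩ : Fin K) : ℕ) (by omega) (by omega)
      have hj'e : j' = ⟨jz, hjz⟩ := σ.injective (Fin.ext hj'3)
      subst hj'e
      have hza : a.1 ≤ jz := hj'1
      have hzb : jz ≤ b.1 := hj'2
      have hpos := sys_pos_of_window hS jz hjz z hzn hcz1 hcz2
      refine (hVmem z).mpr ⟨((p.symm ⟨z, hzn⟩ : Fin n) : ℕ), (p.symm ⟨z, hzn⟩).2, ?_, ?_, ?_⟩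
      · have := sys_le hS hza (by omega); omega
      · have := sys_le hS (show jz+1 ≤ b.1+1 by omega) (by omega); omega
      · simp
    have hVchar := gapfree hVne hgf
    set W := V.min' hVne with hWdef
    have hk'2 : 2 ≤ K - (b.1 - a.1) := by
      have hor : a.1 ≠ 0 ∨ b.1 ≠ K - 1 := by tauto
      omega
    refine hmin (K - (b.1 - a.1)) (by omega) ⟨hk'2,
      (fun j => if j ≤ a.1 then s j else s (j + (b.1 - a.1))),
      (fun j => if j < a.1 then c j else if j = a.1 then W else c (j + (b.1 - a.1))),
      ?_, ?_, ?_, ?_⟩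
    · intro j hj
      dsimp only
      rcases lt_trichotomy j a.1 with hja | hja | hja
      · rw [if_pos (by omega : j ≤ a.1), if_pos (by omega : j + 1 ≤ a.1)]
        exact hS.1 j (by omega)
      · subst hja
        rw [if_pos (le_refl a.1), if_neg (by omega : ¬ (a.1 + 1 ≤ a.1))]
        have harg : a.1 + 1 + (b.1 - a.1) = b.1 + 1 := by omega
        rw [harg]
        omega
      · rw [if_neg (by omega : ¬ (j ≤ a.1)), if_neg (by omega : ¬ (j + 1 ≤ a.1))]
        have harg : j + 1 + (b.1 - a.1) = (j + (b.1 - a.1)) + 1 := by omega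
        rw [harg]
        exact hS.1 _ (by omega)
    · dsimp only
      rw [if_pos (by omega : (0:ℕ) ≤ a.1)]
      exact hS.2.1
    · dsimp only
      rw [if_neg (by omega : ¬ (K - (b.1 - a.1) ≤ a.1))]
      have harg : K - (b.1 - a.1) + (b.1 - a.1) = K := by omega
      rw [harg]
      exact hS.2.2.1
    · intro j hj i
      dsimp only
      rcases lt_trichotomy j a.1 with hja | hja | hja
      · rw [if_pos (by omega : j ≤ a.1), if_pos (by omega : j + 1 ≤ a.1), if_pos hja]
        exact hS.2.2.2 j (by omega) i
      · subst hja
        rw [if_pos (le_refl a.1), if_neg (by omega : ¬ (a.1 + 1 ≤ a.1)),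
          if_neg (by omega : ¬ (a.1 < a.1)), if_pos rfl]
        have harg : a.1 + 1 + (b.1 - a.1) = b.1 + 1 := by omega
        rw [harg]
        have hchar := hVchar ((p i : Fin n) : ℕ)
        rw [hVcard] at hchar
        constructor
        · rintro ⟨h1, h2⟩
          have hmem : ((p i : Fin n) : ℕ) ∈ V :=
            (hVmem _).mpr ⟨i.1, i.2, h1, h2, by rw [Fin.eta]⟩
          rw [hchar] at hmem
          exact hmem
        · intro h
          have hmem : ((p i : Fin n) : ℕ) ∈ V := hchar.mpr h
          obtain ⟨x, hxn, h1, h2, hpx⟩ := (hVmem _).mp hmem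
          have hxe : (⟨x, hxn⟩ : Fin n) = i := p.injective (Fin.ext hpx)
          have := congrArg Fin.val hxe
          simp only at this
          omega
      · rw [if_neg (by omega : ¬ (j ≤ a.1)), if_neg (by omega : ¬ (j + 1 ≤ a.1)),
          if_neg (by omega : ¬ (j < a.1)), if_neg (by omega : ¬ (j = a.1))]
        have harg : j + 1 + (b.1 - a.1) = (j + (b.1 - a.1)) + 1 := by omega
        rw [harg]
        exact hS.2.2.2 _ (by omega) i
  · -- the inflation structure
    refine ⟨fun j => hLpos j.1 j.2, ?_, ?_, ?_, ?_, ?_⟩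
    · intro j i i' hii
      exact Fin.mk_lt_mk.mpr (by have := Fin.lt_def.mp hii; omega)
    · intro j j' i i' hjj
      have hj : j.1 + 1 ≤ j'.1 := Fin.lt_def.mp hjj
      have h1 := i.2
      have h2 := sys_le hS hj (by omega)
      exact Fin.mk_lt_mk.mpr (by simp only at h1; omega)
    · intro x
      obtain ⟨j, hj, h1, h2⟩ := sys_cover hS x
      refine ⟨⟨j, hj⟩, ⟨x.1 - s j, by simp only; omega⟩, Fin.ext (by simp only; omega)⟩
    · intro j i i'
      simp only [Equiv.ofBijective_apply]
      rw [Fin.lt_def, Fin.lt_def]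
      have h1 := hwin j i
      have h2 := hwin j i'
      simp only
      constructor
      · intro h; omega
      · intro h; omega
    · intro j j' i i' hne
      dsimp only
      rw [hσlt, Fin.lt_def]
      have h1 := hwin j i
      have h2 := hwin j' i'
      constructor
      · intro h
        have := sys_align hS j.2 j'.2 h
        omega
      · intro h
        rcases lt_trichotomy (c j.1) (c j'.1) with hc | hc | hc
        · exact hc
        · exact absurd (Fin.ext (sys_c_inj hS j.2 j'.2 hc)) hne
        · have := sys_align hS j'.2 j.2 hc
          omega


theorem exists_decomp (q : PermAny) (h2 : 2 ≤ q.1) :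
    ∃ (k : ℕ) (σ : Equiv.Perm (Fin k)) (β : Fin k → PermAny),
      2 ≤ k ∧ IsSimplePerm σ ∧ IsInfl σ β q := by
  obtain ⟨k, σ, β, s, e, hk2, hsimp, _, _, _, _, _, hconds⟩ := exists_decomp' q h2
  exact ⟨k, σ, β, hk2, hsimp, e, hconds⟩


/-- Pointed pattern containment: an embedding that also respects a marked gap. -/
def MCP (z z' : PermAny × ℕ) : Prop :=
  ∃ f : Fin z.1.1 → Fin z'.1.1, StrictMono f ∧
    (∀ a b, z.1.2 a < z.1.2 b ↔ z'.1.2 (f a) < z'.1.2 (f b)) ∧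
    (∀ i : Fin z.1.1, ((i : ℕ) < z.2 ↔ ((f i : ℕ) < z'.2)))

lemma mcp_refl (z : PermAny × ℕ) : MCP z z :=
  ⟨id, strictMono_id, fun _ _ => Iff.rfl, fun _ => Iff.rfl⟩

lemma mcp_trans {x y z : PermAny × ℕ} (h1 : MCP x y) (h2 : MCP y z) : MCP x z := by
  obtain ⟨f, hf, hfo, hfg⟩ := h1
  obtain ⟨g, hg, hgo, hgg⟩ := h2
  exact ⟨g ∘ f, hg.comp hf, fun a b => (hfo a b).trans (hgo (f a) (f b)),
    fun i => (hfg i).trans (hgg (f i))⟩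

lemma mcp_cp {z z' : PermAny × ℕ} (h : MCP z z') : CP z.1 z'.1 := by
  obtain ⟨f, hf, hfo, -⟩ := h
  exact ⟨f, hf, hfo⟩

lemma cp_to_mcp_zero {p p' : PermAny} (h : CP p p') : MCP (p, 0) (p', 0) := by
  obtain ⟨f, hf, hfo⟩ := h
  exact ⟨f, hf, hfo, fun i => by simp⟩

lemma cp_to_mcp_full {p p' : PermAny} (h : CP p p') : MCP (p, p.1) (p', p'.1) := by
  obtain ⟨f, hf, hfo⟩ := h
  exact ⟨f, hf, hfo, fun i => by simp [i.2, (f i).2]⟩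

lemma marked_mono {k : ℕ} {σ : Equiv.Perm (Fin k)} {β β' : Fin k → PermAny} {q q' : PermAny}
    {e : ∀ j : Fin k, Fin (β j).1 → Fin q.1} {e' : ∀ j : Fin k, Fin (β' j).1 → Fin q'.1}
    {u u' : ℕ} {mk mk' : Fin k → ℕ}
    (h : InflConds σ β q e) (h' : InflConds σ β' q' e')
    (hal : ∀ j i, ((e j i : ℕ) < u ↔ (i : ℕ) < mk j))
    (hal' : ∀ j i, ((e' j i : ℕ) < u' ↔ (i : ℕ) < mk' j))
    (hb : ∀ j, MCP (β j, mk j) (β' j, mk' j)) : MCP (q, u) (q', u') := by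
  obtain ⟨hpos, hmono, hcross, hcover, hval, hcval⟩ := h
  obtain ⟨hpos', hmono', hcross', hcover', hval', hcval'⟩ := h'
  choose J I hJI using hcover
  choose g hg hgo hggap using hb
  have huj : ∀ (j j' : Fin k) i i', e j i = e j' i' → j = j' := by
    intro j j' i i' hee
    rcases lt_trichotomy j j' with hlt | heq | hlt
    · exact absurd hee (ne_of_lt (hcross _ _ _ _ hlt))
    · exact heq
    · exact absurd hee.symm (ne_of_lt (hcross _ _ _ _ hlt))
  have hIval : ∀ (x : Fin q.1) (j : Fin k) (i : Fin (β j).1), e j i = x →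
      J x = j ∧ (I x : ℕ) = (i : ℕ) := by
    intro x j i hx
    have h1 : J x = j := huj _ _ _ _ ((hJI x).trans hx.symm)
    subst h1
    have h2 : I x = i := (hmono (J x)).injective ((hJI x).trans hx.symm)
    exact ⟨rfl, by rw [h2]⟩
  refine ⟨fun x => e' (J x) (g (J x) (I x)), ?_, ?_, ?_⟩
  · intro x y hxy
    show e' (J x) (g (J x) (I x)) < e' (J y) (g (J y) (I y))
    rcases eq_or_ne (J x) (J y) with hJ | hJ
    · obtain ⟨iy, hiy⟩ : ∃ i' : Fin (β (J x)).1, e (J x) i' = y := by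
        rw [hJ]; exact ⟨I y, hJI y⟩
      have hvy : (I y : ℕ) = (iy : ℕ) := (hIval y (J x) iy hiy).2
      have hFy : e' (J y) (g (J y) (I y)) = e' (J x) (g (J x) iy) :=
        dapp_congr e' hJ.symm (dapp_val_congr g hJ.symm hvy)
      rw [hFy]
      have hixy : I x < iy := by
        have := (hmono (J x)).lt_iff_lt (a := I x) (b := iy)
        rw [hJI x, hiy] at this
        exact this.mp hxy
      exact (hmono' (J x)) ((hg (J x)) hixy)
    · have hJlt : J x < J y := by
        rcases lt_or_gt_of_ne hJ with hlt | hlt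
        · exact hlt
        · exact absurd ((hcross _ _ (I y) (I x) hlt).trans_eq (hJI x))
            (by rw [hJI y]; exact not_lt.mpr hxy.le)
      exact hcross' _ _ _ _ hJlt
  · intro x y
    show q.2 x < q.2 y ↔ q'.2 (e' (J x) (g (J x) (I x))) < q'.2 (e' (J y) (g (J y) (I y)))
    rcases eq_or_ne (J x) (J y) with hJ | hJ
    · obtain ⟨iy, hiy⟩ : ∃ i' : Fin (β (J x)).1, e (J x) i' = y := by
        rw [hJ]; exact ⟨I y, hJI y⟩
      have hvy : (I y : ℕ) = (iy : ℕ) := (hIval y (J x) iy hiy).2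
      have hFy : e' (J y) (g (J y) (I y)) = e' (J x) (g (J x) iy) :=
        dapp_congr e' hJ.symm (dapp_val_congr g hJ.symm hvy)
      rw [hFy]
      have h1 : q.2 x < q.2 y ↔ (β (J x)).2 (I x) < (β (J x)).2 iy := by
        have h2 := hval (J x) (I x) iy
        rw [hJI x, hiy] at h2
        exact h2.symm
      rw [h1, hgo (J x), ← hval' (J x)]
    · have h1 : q.2 x < q.2 y ↔ σ (J x) < σ (J y) := by
        conv_lhs => rw [← hJI x, ← hJI y]
        exact (hcval (J x) (J y) (I x) (I y) hJ).symm
      rw [h1, hcval' (J x) (J y) _ _ hJ]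
  · intro x
    show (x : ℕ) < u ↔ ((e' (J x) (g (J x) (I x)) : Fin q'.1) : ℕ) < u'
    have h1 : (x : ℕ) < u ↔ (I x : ℕ) < mk (J x) := by
      conv_lhs => rw [← hJI x]
      exact hal (J x) (I x)
    rw [h1, hggap (J x), ← hal' (J x)]

lemma marked_mono' {k k' : ℕ} {σ : Equiv.Perm (Fin k)} {σ' : Equiv.Perm (Fin k')}
    {β : Fin k → PermAny} {β' : Fin k' → PermAny} {q q' : PermAny}
    {e : ∀ j : Fin k, Fin (β j).1 → Fin q.1} {e' : ∀ j : Fin k', Fin (β' j).1 → Fin q'.1}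
    {u u' : ℕ} {mk : Fin k → ℕ} {mk' : Fin k' → ℕ}
    (hsig : (⟨k, σ⟩ : PermAny) = ⟨k', σ'⟩)
    (h : InflConds σ β q e) (h' : InflConds σ' β' q' e')
    (hal : ∀ j i, ((e j i : ℕ) < u ↔ (i : ℕ) < mk j))
    (hal' : ∀ j i, ((e' j i : ℕ) < u' ↔ (i : ℕ) < mk' j))
    (hb : ∀ (j : Fin k) (j' : Fin k'), (j : ℕ) = (j' : ℕ) →
      MCP (β j, mk j) (β' j', mk' j')) : MCP (q, u) (q', u') := by
  obtain ⟨hk, hσ⟩ := Sigma.mk.inj_iff.mp hsig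
  subst hk
  have hσ' : σ = σ' := eq_of_heq hσ
  subst hσ'
  exact marked_mono h h' hal hal' (fun j => hb j j rfl)

lemma forall2_ofFn {A : Type*} {R : A -> A -> Prop} {k k' : Nat} (u : Fin k -> A) (v : Fin k' -> A)
    (h : List.Forall₂ R (List.ofFn u) (List.ofFn v)) (j : Fin k) (j' : Fin k')
    (hjj : (j : ℕ) = (j' : ℕ)) : R (u j) (v j') := by
  obtain ⟨hlen, hget⟩ := List.forall₂_iff_get.mp h
  have hg := hget j.1 (by simpa using j.2) (by simp only [List.length_ofFn]; omega)
  rw [List.get_ofFn, List.get_ofFn] at hg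
  have e1 : Fin.cast (List.length_ofFn (f := u)) ⟨j.1, by simpa using j.2⟩ = j := Fin.ext rfl
  have e2 : Fin.cast (List.length_ofFn (f := v)) ⟨j.1, by simp only [List.length_ofFn]; omega⟩ = j' :=
    Fin.ext (by simpa using hjj)
  rwa [e1, e2] at hg

lemma IsInfl_mono' {k k' : ℕ} {σ : Equiv.Perm (Fin k)} {σ' : Equiv.Perm (Fin k')}
    {β : Fin k → PermAny} {β' : Fin k' → PermAny} {q q' : PermAny}
    (hsig : (⟨k, σ⟩ : PermAny) = ⟨k', σ'⟩)
    (h : IsInfl σ β q) (h' : IsInfl σ' β' q')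
    (hlen : ∀ (j : Fin k) (j' : Fin k'), (j : ℕ) = (j' : ℕ) → CP (β j) (β' j')) : CP q q' := by
  obtain ⟨hk, hσ⟩ := Sigma.mk.inj_iff.mp hsig
  subst hk
  have hσ' : σ = σ' := eq_of_heq hσ
  subst hσ'
  exact h.mono h' (fun j => hlen j j rfl)

theorem pwo_class (C : Set PermAny) (hC : IsPermClass C)
    (hfin : {p : PermAny | p ∈ C ∧ IsSimplePerm p.2}.Finite) :
    C.PartiallyWellOrderedOn CP := by
  classical
  haveI : IsRefl PermAny CP := ⟨cp_refl⟩
  haveI : IsTrans PermAny CP := ⟨fun _ _ _ => cp_trans⟩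
  rw [Set.PartiallyWellOrderedOn.iff_not_exists_isMinBadSeq (fun p : PermAny => p.1)]
  rintro ⟨f, hbad, hmin⟩
  obtain ⟨hmem, hrel⟩ := hbad
  have hlen : ∀ m, 2 ≤ (f m).1 := by
    intro m
    by_contra hcc
    push_neg at hcc
    rcases (by omega : (f m).1 = 0 ∨ (f m).1 = 1) with h | h
    · exact hrel m (m+1) (by omega) (cp_of_len_zero h)
    · rcases Nat.eq_zero_or_pos (f (m+1)).1 with h0 | h0
      · exact hrel (m+1) (m+2) (by omega) (cp_of_len_zero h0)
      · exact hrel m (m+1) (by omega) (cp_of_len_one h h0)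
  have hdec := fun m => exists_decomp (f m) (hlen m)
  choose k σf βf hk2 hsimpl hinfl using hdec
  have hquot : ∀ m, (⟨k m, σf m⟩ : PermAny) ∈ {p : PermAny | p ∈ C ∧ IsSimplePerm p.2} :=
    fun m => ⟨hC (f m) (hmem m) _ ((hinfl m).quot_le), hsimpl m⟩
  have hblockC : ∀ m j, βf m j ∈ C := fun m j => hC (f m) (hmem m) _ ((hinfl m).block_le j)
  have hblockle : ∀ m j, CP (βf m j) (f m) := fun m j => (hinfl m).block_le j
  have hblocklt : ∀ m j, (βf m j).1 < (f m).1 := fun m j => (hinfl m).block_len_lt (hk2 m) j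
  set U : Set PermAny := {q | ∃ m j, q = βf m j} with hUdef
  have hUpwo : U.PartiallyWellOrderedOn CP := by
    rw [Set.PartiallyWellOrderedOn.iff_forall_not_isBadSeq]
    intro g hgbad
    obtain ⟨hgmem, hgrel⟩ := hgbad
    choose M J hMJ using hgmem
    obtain ⟨i₀, hi₀⟩ : ∃ i₀, ∀ i, M i₀ ≤ M i := by
      have hne : (Set.range M).Nonempty := ⟨M 0, 0, rfl⟩
      obtain ⟨i₀, hi₀⟩ := Nat.sInf_mem hne
      exact ⟨i₀, fun i => by rw [hi₀]; exact Nat.sInf_le ⟨i, rfl⟩⟩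
    set h : ℕ → PermAny := fun t => if t < M i₀ then f t else g (i₀ + (t - M i₀)) with hhdef
    have hh0 : h (M i₀) = g i₀ := by simp [hhdef]
    have hagree : ∀ m, m < M i₀ → f m = h m := fun m hm => (if_pos hm).symm
    have hbadh : Set.PartiallyWellOrderedOn.IsBadSeq CP C h := by
      constructor
      · intro t
        rw [hhdef]
        dsimp only
        split_ifs with ht
        · exact hmem t
        · rw [hMJ (i₀ + (t - M i₀))]; exact hblockC _ _
      · intro m' n' hmn hcp
        rw [hhdef] at hcp
        dsimp only at hcp
        split_ifs at hcp with h1 h2 h2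
        · exact hrel m' n' hmn hcp
        · have hcp2 : CP (g (i₀ + (n' - M i₀))) (f (M (i₀ + (n' - M i₀)))) := by
            rw [hMJ (i₀ + (n' - M i₀))]; exact hblockle _ _
          exact hrel m' (M (i₀ + (n' - M i₀))) (lt_of_lt_of_le h1 (hi₀ _))
            (cp_trans hcp hcp2)
        · omega
        · exact hgrel (i₀ + (m' - M i₀)) (i₀ + (n' - M i₀)) (by omega) hcp
    refine hmin (M i₀) h hagree ?_ hbadh
    rw [hh0, hMJ i₀]
    exact hblocklt _ _
  haveI : IsPreorder PermAny CP := { refl := cp_refl, trans := fun _ _ _ => cp_trans }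
  have hUlist := Set.PartiallyWellOrderedOn.partiallyWellOrderedOn_sublistForall₂ CP hUpwo
  haveI := hfin.to_subtype
  set lab : ℕ → ↥{p : PermAny | p ∈ C ∧ IsSimplePerm p.2} := fun m => ⟨⟨k m, σf m⟩, hquot m⟩
    with hlabdef
  obtain ⟨l₀, hl₀⟩ := Finite.exists_infinite_fiber lab
  have hinf : (lab ⁻¹' {l₀}).Infinite := Set.infinite_coe_iff.mp hl₀
  set φ : ℕ → ℕ := Nat.nth (· ∈ lab ⁻¹' {l₀}) with hφdef
  have hφmono : StrictMono φ := Nat.nth_strictMono hinf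
  have hφmem : ∀ m, lab (φ m) = l₀ := fun m => Nat.nth_mem_of_infinite hinf m
  have hsig : ∀ m m', (⟨k (φ m), σf (φ m)⟩ : PermAny) = ⟨k (φ m'), σf (φ m')⟩ := by
    intro m m'
    have h1 := hφmem m
    have h2 := hφmem m'
    have := h1.trans h2.symm
    exact congrArg Subtype.val this
  set L : ℕ → List PermAny := fun m => List.ofFn (fun j => βf (φ m) j) with hLdef
  obtain ⟨m1, m2, hlt, hsubl⟩ := hUlist.exists_lt (f := L) (by
    intro m x hx
    rw [hLdef] at hx
    dsimp only at hx
    rw [List.mem_ofFn] at hx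
    obtain ⟨j, rfl⟩ := hx
    exact ⟨φ m, j, rfl⟩)
  obtain ⟨l', hfa, hsl⟩ := List.sublistForall₂_iff.mp hsubl
  have hklen : k (φ m1) = k (φ m2) := by
    have := hsig m1 m2
    exact congrArg Sigma.fst this
  have hlen1 : (L m1).length = k (φ m1) := by simp [hLdef]
  have hlen2 : (L m2).length = k (φ m2) := by simp [hLdef]
  have hl'len : l'.length = (L m2).length := by
    rw [hfa.length_eq.symm] at *
    rw [hlen1, hlen2] at *
    omega
  have hl'eq : l' = L m2 := hsl.eq_of_length hl'len
  subst hl'eq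
  have hfa2 := hfa
  have hfa3 : List.Forall₂ CP (List.ofFn fun j => βf (φ m1) j)
      (List.ofFn fun j => βf (φ m2) j) := hfa2
  have hcontain : CP (f (φ m1)) (f (φ m2)) := by
    refine IsInfl_mono' (hsig m1 m2) (hinfl (φ m1)) (hinfl (φ m2)) ?_
    intro j j' hjj
    exact forall2_ofFn _ _ hfa3 j j' hjj
  exact hrel (φ m1) (φ m2) (hφmono hlt) hcontain



lemma cuts_le {kk : ℕ} {s : ℕ → ℕ} (hmono : ∀ j, j < kk → s j < s (j+1))
    {j j' : ℕ} (h : j ≤ j') (h' : j' ≤ kk) : s j ≤ s j' := by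
  induction j' with
  | zero => simp [Nat.le_zero.mp h]
  | succ m ih =>
    rcases Nat.lt_or_ge j (m+1) with hlt | hge
    · exact le_trans (ih (by omega) (by omega)) (le_of_lt (hmono m (by omega)))
    · have : j = m + 1 := by omega
      simp [this]

lemma cut_classify {kk n : ℕ} {s : ℕ → ℕ} (hmono : ∀ j, j < kk → s j < s (j+1))
    (h0 : s 0 = 0) (hl : s kk = n) (u : ℕ) (hu : u ≤ n) :
    (∃ g, g ≤ kk ∧ u = s g) ∨ (∃ j, j < kk ∧ s j < u ∧ u < s (j+1)) := by
  have key : ∀ t, t ≤ kk → u ≤ s t →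
      (∃ g, g ≤ t ∧ u = s g) ∨ (∃ j, j < t ∧ s j < u ∧ u < s (j+1)) := by
    intro t
    induction t with
    | zero => intro _ h; rw [h0] at h; exact Or.inl ⟨0, le_refl _, by omega⟩
    | succ m ih =>
      intro hm h
      rcases Nat.lt_or_ge (s m) u with hlt | hge
      · rcases Nat.lt_or_ge u (s (m+1)) with h2 | h2
        · exact Or.inr ⟨m, by omega, hlt, h2⟩
        · exact Or.inl ⟨m+1, le_refl _, by omega⟩
      · rcases ih (by omega) hge with ⟨g, hg1, hg2⟩ | ⟨j, hj⟩
        · exact Or.inl ⟨g, by omega, hg2⟩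
        · exact Or.inr ⟨j, by omega, hj.2⟩
  exact key kk (le_refl _) (by omega)

theorem marked_pwo (C : Set PermAny) (hC : IsPermClass C)
    (hfin : {p : PermAny | p ∈ C ∧ IsSimplePerm p.2}.Finite) :
    {z : PermAny × ℕ | z.1 ∈ C ∧ z.2 ≤ z.1.1}.PartiallyWellOrderedOn MCP := by
  classical
  haveI : IsRefl (PermAny × ℕ) MCP := ⟨mcp_refl⟩
  haveI : IsTrans (PermAny × ℕ) MCP := ⟨fun _ _ _ => mcp_trans⟩
  set W : Set (PermAny × ℕ) := {z | z.1 ∈ C ∧ z.2 ≤ z.1.1} with hWdef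
  rw [Set.PartiallyWellOrderedOn.iff_not_exists_isMinBadSeq (fun z : PermAny × ℕ => z.1.1)]
  rintro ⟨f, ⟨hmem, hrel⟩, hmin⟩
  -- only finitely many indices have length ≤ 1
  have hdist : ∀ m n, m < n → f m ≠ f n := fun m n h he => hrel m n h (he ▸ mcp_refl _)
  obtain ⟨t₀, ht₀⟩ : ∃ t₀, ∀ t, t₀ ≤ t → 2 ≤ (f t).1.1 := by
    have hfin2 : {z : PermAny × ℕ | z.1.1 ≤ 1 ∧ z.2 ≤ 1}.Finite := by
      have := (finite_len_le 1).prod (Set.finite_Iic 1)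
      apply this.subset
      rintro ⟨p, u⟩ ⟨h1, h2⟩
      exact ⟨h1, h2⟩
    have hTfin : {t : ℕ | (f t).1.1 ≤ 1}.Finite := by
      refine Set.Finite.of_finite_image (f := f) ?_ ?_
      · apply hfin2.subset
        rintro z ⟨t, ht, rfl⟩
        exact ⟨ht, le_trans (hmem t).2 ht⟩
      · intro m hm n hn hmn
        by_contra hne
        rcases Nat.lt_or_ge m n with h | h
        · exact hdist m n h hmn
        · exact hdist n m (by omega) hmn.symm
    obtain ⟨b, hb⟩ := hTfin.bddAbove
    exact ⟨b+1, fun t ht => by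
      by_contra hc
      push_neg at hc
      have := hb (show t ∈ {t : ℕ | (f t).1.1 ≤ 1} from by
        simp only [Set.mem_setOf_eq]; omega)
      omega⟩
  -- decompose every long enough entry
  have hdec : ∀ t, ∃ (k : ℕ) (σ : Equiv.Perm (Fin k)) (β : Fin k → PermAny) (s : ℕ → ℕ)
      (e : ∀ j : Fin k, Fin (β j).1 → Fin (f t).1.1),
      t₀ ≤ t → (2 ≤ k ∧ IsSimplePerm σ ∧
        (∀ j, j < k → s j < s (j+1)) ∧ s 0 = 0 ∧ s k = (f t).1.1 ∧
        (∀ j : Fin k, (β j).1 = s (j.1+1) - s j.1) ∧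
        (∀ (j : Fin k) (i : Fin (β j).1), (e j i : ℕ) = s j.1 + i.1) ∧
        InflConds σ β (f t).1 e) := by
    intro t
    rcases Nat.lt_or_ge t t₀ with ht | ht
    · exact ⟨0, Equiv.refl _, Fin.elim0, id, fun j => j.elim0, fun hc => absurd hc (by omega)⟩
    · obtain ⟨k, σ, β, s, e, hconds⟩ := exists_decomp' (f t).1 (ht₀ t ht)
      exact ⟨k, σ, β, s, e, fun _ => hconds⟩
  choose k σf βf sf ef hconds using hdec
  -- marks for the blocks
  have hmarks : ∀ t, ∃ mk : Fin (k t) → ℕ, t₀ ≤ t →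
      ((∀ (j : Fin (k t)) (i : Fin (βf t j).1),
        ((ef t j i : ℕ) < (f t).2 ↔ (i : ℕ) < mk j)) ∧ (∀ j, mk j ≤ (βf t j).1)) := by
    intro t
    rcases Nat.lt_or_ge t t₀ with ht | ht
    · exact ⟨fun _ => 0, fun hc => absurd hc (by omega)⟩
    · obtain ⟨hk2, hsimp, hcmono, hc0, hclast, hblen, hespec, hic⟩ := hconds t ht
      have hu : (f t).2 ≤ (f t).1.1 := (hmem t).2
      rcases cut_classify hcmono hc0 hclast (f t).2 hu with ⟨g, hg1, hg2⟩ | ⟨j₀, hj₀, hj₀1, hj₀2⟩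
      · refine ⟨fun j => if j.1 < g then (βf t j).1 else 0, fun _ => ⟨?_, ?_⟩⟩
        · intro j i
          dsimp only
          split_ifs with hj
          · have h1 : (ef t j i : ℕ) < sf t g := by
              rw [hespec j i]
              have h2 : sf t (j.1+1) ≤ sf t g := cuts_le hcmono (by omega) hg1
              have h3 : (i : ℕ) < sf t (j.1+1) - sf t j.1 :=
                lt_of_lt_of_le i.2 (le_of_eq (hblen j))
              omega
            simp only [hg2]
            exact ⟨fun _ => i.2, fun _ => h1⟩
          · have h1 : sf t g ≤ (ef t j i : ℕ) := by
              rw [hespec j i]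
              have h2 : sf t g ≤ sf t j.1 := cuts_le hcmono (by omega) (by omega)
              omega
            simp only [hg2]
            omega
        · intro j; dsimp only; split_ifs <;> omega
      · refine ⟨fun j => if j.1 = j₀ then (f t).2 - sf t j₀
          else if j.1 < j₀ then (βf t j).1 else 0, fun _ => ⟨?_, ?_⟩⟩
        · intro j i
          dsimp only
          rcases eq_or_ne j.1 j₀ with hje | hne
          · rw [if_pos hje, hespec j i, hje]
            omega
          · rw [if_neg hne]
            split_ifs with hj
            · have h1 : (ef t j i : ℕ) < sf t j₀ := by
                rw [hespec j i]
                have h2 : sf t (j.1+1) ≤ sf t j₀ := cuts_le hcmono (by omega) (by omega)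
                have h3 : (i : ℕ) < sf t (j.1+1) - sf t j.1 :=
                  lt_of_lt_of_le i.2 (le_of_eq (hblen j))
                omega
              exact ⟨fun _ => i.2, fun _ => by omega⟩
            · have h1 : sf t (j₀+1) ≤ (ef t j i : ℕ) := by
                rw [hespec j i]
                have h2 : sf t (j₀+1) ≤ sf t j.1 := cuts_le hcmono (by omega) (by omega)
                omega
              omega
        · intro j
          dsimp only
          have hj₀3 : sf t j₀ < sf t (j₀+1) := hcmono j₀ hj₀
          split_ifs with h1 h2
          · have hbl := hblen j
            rw [h1] at hbl
            omega
          · omega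
          · omega
  choose mk hmk using hmarks
  -- children are below their parents
  have hsub : ∀ t (ht : t₀ ≤ t) (j : Fin (k t)), MCP (βf t j, mk t j) (f t) := by
    intro t ht j
    obtain ⟨hk2, hsimp, hcmono, hc0, hclast, hblen, hespec, hic⟩ := hconds t ht
    obtain ⟨hal, hmkb⟩ := hmk t ht
    obtain ⟨hpos, hmono, hcross, hcover, hval, hcval⟩ := hic
    refine ⟨ef t j, hmono j, hval j, ?_⟩
    intro i
    exact (hal j i).symm
  -- children in W and shorter
  have hchildW : ∀ t (ht : t₀ ≤ t) (j : Fin (k t)), (βf t j, mk t j) ∈ W := by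
    intro t ht j
    obtain ⟨hk2, hsimp, hcmono, hc0, hclast, hblen, hespec, hic⟩ := hconds t ht
    exact ⟨hC (f t).1 (hmem t).1 _ (IsInfl.block_le ⟨ef t, hic⟩ j), (hmk t ht).2 j⟩
  have hchildlt : ∀ t (ht : t₀ ≤ t) (j : Fin (k t)), (βf t j).1 < (f t).1.1 := by
    intro t ht j
    obtain ⟨hk2, hsimp, hcmono, hc0, hclast, hblen, hespec, hic⟩ := hconds t ht
    exact IsInfl.block_len_lt ⟨ef t, hic⟩ hk2 j
  have hquot : ∀ t (ht : t₀ ≤ t),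
      (⟨k t, σf t⟩ : PermAny) ∈ {p : PermAny | p ∈ C ∧ IsSimplePerm p.2} := by
    intro t ht
    obtain ⟨hk2, hsimp, hcmono, hc0, hclast, hblen, hespec, hic⟩ := hconds t ht
    exact ⟨hC (f t).1 (hmem t).1 _ (IsInfl.quot_le ⟨ef t, hic⟩), hsimp⟩
  -- the set of children is pwo
  set U : Set (PermAny × ℕ) := {z | ∃ t j, t₀ ≤ t ∧ z = (βf t j, mk t j)} with hUdef
  have hUpwo : U.PartiallyWellOrderedOn MCP := by
    rw [Set.PartiallyWellOrderedOn.iff_forall_not_isBadSeq]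
    intro g hgbad
    obtain ⟨hgmem, hgrel⟩ := hgbad
    choose M J hM hMJ using hgmem
    obtain ⟨i₀, hi₀⟩ : ∃ i₀, ∀ i, M i₀ ≤ M i := by
      have hne : (Set.range M).Nonempty := ⟨M 0, 0, rfl⟩
      obtain ⟨i₀, hi₀⟩ := Nat.sInf_mem hne
      exact ⟨i₀, fun i => by rw [hi₀]; exact Nat.sInf_le ⟨i, rfl⟩⟩
    set h : ℕ → PermAny × ℕ := fun t => if t < M i₀ then f t else g (i₀ + (t - M i₀)) with hhdef
    have hh0 : h (M i₀) = g i₀ := by simp [hhdef]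
    have hagree : ∀ m, m < M i₀ → f m = h m := fun m hm => (if_pos hm).symm
    have hbadh : Set.PartiallyWellOrderedOn.IsBadSeq MCP W h := by
      constructor
      · intro t
        rw [hhdef]
        dsimp only
        split_ifs with ht
        · exact hmem t
        · rw [hMJ (i₀ + (t - M i₀))]
          exact hchildW _ (hM _) _
      · intro m' n' hmn hcp
        rw [hhdef] at hcp
        dsimp only at hcp
        split_ifs at hcp with h1 h2 h2
        · exact hrel m' n' hmn hcp
        · have hcp2 : MCP (g (i₀ + (n' - M i₀))) (f (M (i₀ + (n' - M i₀)))) := by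
            rw [hMJ (i₀ + (n' - M i₀))]
            exact hsub _ (hM _) _
          exact hrel m' (M (i₀ + (n' - M i₀))) (lt_of_lt_of_le h1 (hi₀ _))
            (mcp_trans hcp hcp2)
        · omega
        · exact hgrel (i₀ + (m' - M i₀)) (i₀ + (n' - M i₀)) (by omega) hcp
    refine hmin (M i₀) h hagree ?_ hbadh
    rw [hh0, hMJ i₀]
    exact hchildlt _ (hM _) _
  haveI : IsPreorder (PermAny × ℕ) MCP := { refl := mcp_refl, trans := fun _ _ _ => mcp_trans }
  have hUlist := Set.PartiallyWellOrderedOn.partiallyWellOrderedOn_sublistForall₂ MCP hUpwo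
  haveI := hfin.to_subtype
  set lab : ℕ → ↥{p : PermAny | p ∈ C ∧ IsSimplePerm p.2} :=
    fun m => ⟨⟨k (t₀ + m), σf (t₀ + m)⟩, hquot (t₀ + m) (by omega)⟩ with hlabdef
  obtain ⟨l₀, hl₀⟩ := Finite.exists_infinite_fiber lab
  have hinf : (lab ⁻¹' {l₀}).Infinite := Set.infinite_coe_iff.mp hl₀
  set φ : ℕ → ℕ := Nat.nth (· ∈ lab ⁻¹' {l₀}) with hφdef
  have hφmono : StrictMono φ := Nat.nth_strictMono hinf
  have hφmem : ∀ m, lab (φ m) = l₀ := fun m => Nat.nth_mem_of_infinite hinf m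
  have hsig : ∀ m m', (⟨k (t₀ + φ m), σf (t₀ + φ m)⟩ : PermAny)
      = ⟨k (t₀ + φ m'), σf (t₀ + φ m')⟩ := by
    intro m m'
    have h1 := hφmem m
    have h2 := hφmem m'
    have := h1.trans h2.symm
    exact congrArg Subtype.val this
  obtain ⟨m1, m2, hlt, hsubl⟩ := hUlist.exists_lt
    (f := fun m => List.ofFn (fun j => (βf (t₀ + φ m) j, mk (t₀ + φ m) j))) (by
      intro m x hx
      rw [List.mem_ofFn] at hx
      obtain ⟨j, rfl⟩ := hx
      exact ⟨t₀ + φ m, j, by omega, rfl⟩)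
  obtain ⟨l', hfa, hsl⟩ := List.sublistForall₂_iff.mp hsubl
  have hklen : k (t₀ + φ m1) = k (t₀ + φ m2) := congrArg Sigma.fst (hsig m1 m2)
  have hl'len : l'.length = (List.ofFn
      (fun j => (βf (t₀ + φ m2) j, mk (t₀ + φ m2) j))).length := by
    have h1 := hfa.length_eq
    simp only [List.length_ofFn] at *
    omega
  have hl'eq : l' = _ := hsl.eq_of_length hl'len
  subst hl'eq
  set t1 := t₀ + φ m1 with ht1def
  set t2 := t₀ + φ m2 with ht2def
  obtain ⟨hk21, hsimp1, hcmono1, hc01, hclast1, hblen1, hespec1, hic1⟩ :=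
    hconds t1 (by omega)
  obtain ⟨hk22, hsimp2, hcmono2, hc02, hclast2, hblen2, hespec2, hic2⟩ :=
    hconds t2 (by omega)
  have hcontain : MCP ((f t1).1, (f t1).2) ((f t2).1, (f t2).2) := by
    refine marked_mono' (hsig m1 m2) hic1 hic2 (hmk t1 (by omega)).1 (hmk t2 (by omega)).1 ?_
    intro j j' hjj
    exact forall2_ofFn _ _ hfa j j' hjj
  have hcontain2 : MCP (f t1) (f t2) := by
    rwa [Prod.mk.eta, Prod.mk.eta] at hcontain
  exact hrel t1 t2 (by have := hφmono hlt; omega) hcontain2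

def Bas (C : Set PermAny) : Set PermAny :=
  {q | q ∉ C ∧ ∀ r : PermAny, r.1 < q.1 → CP r q → r ∈ C}

lemma av_bas (C : Set PermAny) (hC : IsPermClass C) : C = AvSet (Bas C) := by
  classical
  ext p
  constructor
  · intro hp b hb hcp
    exact hb.1 (hC p hp b hcp)
  · intro hp
    by_contra hpc
    have hex : ∃ ln, ∃ q : PermAny, q.1 = ln ∧ CP q p ∧ q ∉ C := ⟨p.1, p, rfl, cp_refl p, hpc⟩
    obtain ⟨q, hq1, hq2, hq3⟩ := Nat.find_spec hex
    have hqBas : q ∈ Bas C := by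
      refine ⟨hq3, fun r hr1 hr2 => ?_⟩
      by_contra hrc
      exact Nat.find_min hex (show r.1 < Nat.find hex by omega) ⟨r, rfl, cp_trans hr2 hq2, hrc⟩
    exact hp q hqBas hq2


/-- `δ` is `q` with its maximum entry (at position `x`) deleted. -/
def DelMax (q δ : PermAny) (x : ℕ) : Prop :=
  x < q.1 ∧ δ.1 + 1 = q.1 ∧
  (∀ i : Fin q.1, ((q.2 i : ℕ) = q.1 - 1 ↔ (i : ℕ) = x)) ∧
  ∃ d : Fin δ.1 → Fin q.1,
    (∀ i : Fin δ.1, (d i : ℕ) = if (i : ℕ) < x then (i : ℕ) else (i : ℕ) + 1) ∧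
    (∀ a b : Fin δ.1, δ.2 a < δ.2 b ↔ q.2 (d a) < q.2 (d b))

lemma delmax_exists (q : PermAny) (h1 : 1 ≤ q.1) :
    ∃ (δ : PermAny) (x : ℕ), DelMax q δ x ∧ CP δ q ∧ δ.1 + 1 = q.1 := by
  obtain ⟨n, p⟩ := q
  simp only at h1
  have hn1 : n - 1 < n := by omega
  set xf : Fin n := p.symm ⟨n-1, hn1⟩ with hxf
  have hxf2 := xf.2
  have hd : ∀ i : Fin (n-1), (if (i : ℕ) < (xf : ℕ) then (i : ℕ) else (i : ℕ) + 1) < n := by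
    intro i
    have := i.2
    split_ifs <;> omega
  set d : Fin (n-1) → Fin n := fun i => ⟨_, hd i⟩ with hddef
  have hdval : ∀ i, (d i : ℕ) = if (i : ℕ) < (xf : ℕ) then (i : ℕ) else (i : ℕ) + 1 :=
    fun i => rfl
  have hdne : ∀ i, (d i : ℕ) ≠ (xf : ℕ) := by
    intro i
    rw [hdval i]
    have := i.2
    split_ifs <;> omega
  have hmaxchar : ∀ i : Fin n, ((p i : ℕ) = n - 1 ↔ (i : ℕ) = (xf : ℕ)) := by
    intro i
    constructor
    · intro hv
      have : p i = ⟨n-1, hn1⟩ := Fin.ext hv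
      have : i = xf := by rw [hxf, ← this]; simp
      rw [this]
    · intro hv
      have : i = xf := Fin.ext hv
      rw [this, hxf]
      simp
  have hpd : ∀ i : Fin (n-1), (p (d i) : ℕ) < n - 1 := by
    intro i
    have h2 := (p (d i)).2
    have h3 : ¬((p (d i) : ℕ) = n - 1) := fun hc => hdne i ((hmaxchar (d i)).mp hc)
    omega
  have hρinj : Function.Injective (fun i : Fin (n-1) => (⟨(p (d i) : ℕ), hpd i⟩ : Fin (n-1))) := by
    intro a b hab
    have h2 : (p (d a) : ℕ) = (p (d b) : ℕ) := by
      have := congrArg Fin.val hab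
      simpa using this
    have h3 : d a = d b := p.injective (Fin.ext h2)
    have h4 := congrArg Fin.val h3
    rw [hdval a, hdval b] at h4
    have ha := a.2
    have hb := b.2
    apply Fin.ext
    split_ifs at h4 <;> omega
  set ρ := Equiv.ofBijective _ ((Finite.injective_iff_bijective).mp hρinj) with hρdef
  have hρval : ∀ a b : Fin (n-1), ρ a < ρ b ↔ p (d a) < p (d b) := by
    intro a b
    rw [hρdef]
    simp only [Equiv.ofBijective_apply]
    rw [Fin.lt_def, Fin.lt_def]
  have hdmono : StrictMono d := by
    intro a b hab
    have h2 := Fin.lt_def.mp hab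
    rw [Fin.lt_def, hdval a, hdval b]
    split_ifs <;> omega
  exact ⟨⟨n-1, ρ⟩, (xf : ℕ), ⟨hxf2, by simp; omega, hmaxchar, d, hdval, hρval⟩,
    ⟨d, hdmono, hρval⟩, by simp; omega⟩

lemma delmax_mcp {q q' δ δ' : PermAny} {x x' : ℕ}
    (h : DelMax q δ x) (h' : DelMax q' δ' x') (hm : MCP (δ, x) (δ', x')) : CP q q' := by
  obtain ⟨hx, hlen, hchar, d, hdval, hdord⟩ := h
  obtain ⟨hx', hlen', hchar', d', hdval', hdord'⟩ := h'
  obtain ⟨f, hf, hford, hfgap⟩ := hm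
  simp only at hf hford hfgap
  have hmax : ∀ i : Fin q.1, (i : ℕ) ≠ x → (q.2 i : ℕ) < q.1 - 1 := by
    intro i hi
    have h1 := (q.2 i).2
    have h2 : ¬((q.2 i : ℕ) = q.1 - 1) := fun hc => hi ((hchar i).mp hc)
    omega
  have hmax' : ∀ i : Fin q'.1, (i : ℕ) ≠ x' → (q'.2 i : ℕ) < q'.1 - 1 := by
    intro i hi
    have h1 := (q'.2 i).2
    have h2 : ¬((q'.2 i : ℕ) = q'.1 - 1) := fun hc => hi ((hchar' i).mp hc)
    omega
  have hxval : (q'.2 ⟨x', hx'⟩ : ℕ) = q'.1 - 1 := (hchar' ⟨x', hx'⟩).mpr rfl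
  have hxvalq : ∀ y : Fin q.1, (y : ℕ) = x → (q.2 y : ℕ) = q.1 - 1 :=
    fun y hy => (hchar y).mpr hy
  -- index of a non-max point in δ
  have hidx : ∀ y : Fin q.1, (y : ℕ) ≠ x → ∃ iy : Fin δ.1, (d iy : ℕ) = (y : ℕ) := by
    intro y hy
    have h2 := y.2
    rcases Nat.lt_or_ge (y : ℕ) x with h3 | h3
    · refine ⟨⟨(y : ℕ), by omega⟩, ?_⟩
      rw [hdval]
      simp only
      rw [if_pos h3]
    · refine ⟨⟨(y : ℕ) - 1, by omega⟩, ?_⟩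
      rw [hdval]
      simp only
      rw [if_neg (by omega)]
      omega
  classical
  set F : Fin q.1 → Fin q'.1 := fun y =>
    if hy : (y : ℕ) = x then ⟨x', hx'⟩
    else d' (f (Classical.choose (hidx y hy))) with hFdef
  have hFx : ∀ y : Fin q.1, (y : ℕ) = x → F y = ⟨x', hx'⟩ := by
    intro y hy
    rw [hFdef]
    exact dif_pos hy
  have hFkey : ∀ (y : Fin q.1) (hy : (y : ℕ) ≠ x) (iy : Fin δ.1),
      (d iy : ℕ) = (y : ℕ) → F y = d' (f iy) := by
    intro y hy iy hiy
    rw [hFdef]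
    simp only
    rw [dif_neg hy]
    have hspec := Classical.choose_spec (hidx y hy)
    have : Classical.choose (hidx y hy) = iy := by
      apply Fin.ext
      have e1 := hdval (Classical.choose (hidx y hy))
      have e2 := hdval iy
      have hc1 := (Classical.choose (hidx y hy)).2
      have hc2 := iy.2
      rw [e1] at hspec
      rw [e2] at hiy
      split_ifs at hspec hiy <;> omega
    rw [this]
  -- the image of a non-max point is not x', and gap transfer
  have hFgap : ∀ (y : Fin q.1) (hy : (y : ℕ) ≠ x) (iy : Fin δ.1) (hiy : (d iy : ℕ) = (y : ℕ)),
      ((F y : ℕ) ≠ x') ∧ ((y : ℕ) < x ↔ (F y : ℕ) < x') ∧ (F y : ℕ) = (d' (f iy) : ℕ) := by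
    intro y hy iy hiy
    rw [hFkey y hy iy hiy]
    have e1 := hdval' (f iy)
    have e2 := hdval iy
    have hg := hfgap iy
    have hiyx : ((iy : ℕ) < x ↔ (y : ℕ) < x) := by
      rw [e2] at hiy
      split_ifs at hiy <;> omega
    constructor
    · rw [e1]; split_ifs <;> omega
    · constructor
      · rw [e1]
        rw [← hiyx]
        rw [hg]
        split_ifs <;> omega
      · rfl
  refine ⟨F, ?_, ?_⟩
  · intro a b hab
    have habv := Fin.lt_def.mp hab
    rw [Fin.lt_def]
    rcases eq_or_ne (a : ℕ) x with hax | hax <;> rcases eq_or_ne (b : ℕ) x with hbx | hbx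
    · omega
    · obtain ⟨ib, hib⟩ := hidx b hbx
      obtain ⟨h1, h2, h3⟩ := hFgap b hbx ib hib
      rw [hFx a hax]
      have : ¬((b : ℕ) < x) := by omega
      simp only
      omega
    · obtain ⟨ia, hia⟩ := hidx a hax
      obtain ⟨h1, h2, h3⟩ := hFgap a hax ia hia
      rw [hFx b hbx]
      have : (a : ℕ) < x := by omega
      simp only
      omega
    · obtain ⟨ia, hia⟩ := hidx a hax
      obtain ⟨ib, hib⟩ := hidx b hbx
      obtain ⟨h1a, h2a, h3a⟩ := hFgap a hax ia hia
      obtain ⟨h1b, h2b, h3b⟩ := hFgap b hbx ib hib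
      have hiab : ia < ib := by
        rw [Fin.lt_def]
        have e1 := hdval ia
        have e2 := hdval ib
        split_ifs at e1 e2 <;> omega
      have hfab := Fin.lt_def.mp (hf hiab)
      have e1 := hdval' (f ia)
      have e2 := hdval' (f ib)
      rw [h3a, h3b]
      split_ifs at e1 e2 <;> omega
  · intro a b
    rcases eq_or_ne (a : ℕ) x with hax | hax <;> rcases eq_or_ne (b : ℕ) x with hbx | hbx
    · have : a = b := Fin.ext (by omega)
      subst this
      simp
    · obtain ⟨ib, hib⟩ := hidx b hbx
      obtain ⟨h1, h2, h3⟩ := hFgap b hbx ib hib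
      rw [hFx a hax]
      have hv1 := hxvalq a hax
      have hv2 := hmax b hbx
      have hv3 := hmax' (F b) h1
      rw [Fin.lt_def, Fin.lt_def, hxval]
      constructor
      · intro hcc; omega
      · intro hcc; omega
    · obtain ⟨ia, hia⟩ := hidx a hax
      obtain ⟨h1, h2, h3⟩ := hFgap a hax ia hia
      rw [hFx b hbx]
      have hv1 := hxvalq b hbx
      have hv2 := hmax a hax
      have hv3 := hmax' (F a) h1
      rw [Fin.lt_def, Fin.lt_def, hxval]
      constructor
      · intro hcc; omega
      · intro hcc; omega
    · obtain ⟨ia, hia⟩ := hidx a hax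
      obtain ⟨ib, hib⟩ := hidx b hbx
      have hda : d ia = a := Fin.ext hia
      have hdb : d ib = b := Fin.ext hib
      have e1 : q.2 a < q.2 b ↔ δ.2 ia < δ.2 ib := by
        rw [← hda, ← hdb]
        exact (hdord ia ib).symm
      have e2 : δ.2 ia < δ.2 ib ↔ δ'.2 (f ia) < δ'.2 (f ib) := hford ia ib
      have e3 : δ'.2 (f ia) < δ'.2 (f ib) ↔ q'.2 (d' (f ia)) < q'.2 (d' (f ib)) :=
        hdord' (f ia) (f ib)
      rw [e1, e2, e3, hFkey a hax ia hia, hFkey b hbx ib hib]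

theorem simple_bas_finite' (C : Set PermAny) (hC : IsPermClass C)
    (hfin : {p : PermAny | p ∈ C ∧ IsSimplePerm p.2}.Finite) :
    {q : PermAny | q ∈ Bas C ∧ IsSimplePerm q.2}.Finite := by
  by_contra hinf
  rw [← Set.not_infinite, not_not] at hinf
  have hinf1 : ({q : PermAny | q ∈ Bas C ∧ IsSimplePerm q.2} ∩ {q : PermAny | 1 ≤ q.1}).Infinite := by
    have := hinf.diff (finite_len_le 0)
    apply this.mono
    intro q hq
    obtain ⟨h1, h2⟩ := hq
    refine ⟨h1, ?_⟩
    simp only [Set.mem_setOf_eq] at h2 ⊢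
    omega
  obtain e := hinf1.natEmbedding
  have hdm := fun t => delmax_exists (e t : PermAny) (e t).2.2
  choose δ x hdm hcp hlen using hdm
  have hδC : ∀ t, δ t ∈ C := by
    intro t
    have hb : (e t : PermAny) ∈ Bas C := (e t).2.1.1
    exact hb.2 (δ t) (by have := hlen t; omega) (hcp t)
  obtain ⟨m, n, hmn, hmcp⟩ := (marked_pwo C hC hfin).exists_lt (f := fun t => (δ t, x t))
    (fun t => ⟨hδC t, by
      show x t ≤ (δ t).1
      have := (hdm t).1
      have := hlen t
      omega⟩)
  have hqq : CP (e m : PermAny) (e n : PermAny) := delmax_mcp (hdm m) (hdm n) hmcp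
  have hne : (e m : PermAny) ≠ (e n : PermAny) :=
    fun hh => (by omega : m ≠ n) (e.injective (Subtype.ext hh))
  have hle := length_le_of_cp hqq
  rcases lt_or_eq_of_le hle with hl | hl
  · exact ((e m).2.1.1.1 : (e m : PermAny) ∉ C) ((e n).2.1.1.2 _ hl hqq)
  · exact hne (eq_of_cp_of_len_eq hl hqq)

/-- The Schmerl–Trotter ingredient: there are only finitely many simple minimal
non-members of `C`. -/
theorem simple_bas_finite (C : Set PermAny) (hC : IsPermClass C)
    (hfin : {p : PermAny | p ∈ C ∧ IsSimplePerm p.2}.Finite) :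
    {q : PermAny | q ∈ Bas C ∧ IsSimplePerm q.2}.Finite :=
  simple_bas_finite' C hC hfin

lemma bas_finite (C : Set PermAny) (hC : IsPermClass C)
    (hfin : {p : PermAny | p ∈ C ∧ IsSimplePerm p.2}.Finite) : (Bas C).Finite := by
  set D := C ∪ Bas C with hDdef
  have hD : IsPermClass D := by
    rintro p (hp | hp) q hq
    · exact Or.inl (hC p hp q hq)
    · rcases lt_trichotomy q.1 p.1 with hl | hl | hl
      · exact Or.inl (hp.2 q hl hq)
      · rw [eq_of_cp_of_len_eq hl hq]
        exact Or.inr hp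
      · exact absurd (length_le_of_cp hq) (by omega)
  have hDsimple : {p : PermAny | p ∈ D ∧ IsSimplePerm p.2}.Finite := by
    apply Set.Finite.subset (hfin.union (simple_bas_finite C hC hfin))
    rintro p ⟨hp | hp, hs⟩
    · exact Or.inl ⟨hp, hs⟩
    · exact Or.inr ⟨hp, hs⟩
  have hpwoD := pwo_class D hD hDsimple
  by_contra hinf
  rw [← Set.not_infinite, not_not] at hinf
  obtain e := hinf.natEmbedding
  obtain ⟨m, n, hmn, hcp⟩ := hpwoD.exists_lt (f := fun t => (e t : PermAny)) (fun t => Or.inr (e t).2)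
  have hne : (e m : PermAny) ≠ (e n : PermAny) :=
    fun h => (by omega : m ≠ n) (e.injective (Subtype.ext h))
  have hle := length_le_of_cp hcp
  rcases lt_or_eq_of_le hle with hl | hl
  · exact ((e m).2.1 : (e m : PermAny) ∉ C) ((e n).2.2 _ hl hcp)
  · exact hne (eq_of_cp_of_len_eq hl hcp)

end AA

/-- A permutation class with only finitely many simple permutations
is finitely based and is partially well-ordered under pattern containment
(every set of pairwise incomparable permutations in it is finite). -/
theorem finitely_based_and_pwo_of_finitely_many_simples
    (C : Set PermAny) (hC : IsPermClass C)
    (hfin : {p : PermAny | p ∈ C ∧ IsSimplePerm p.2}.Finite) :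
    (∃ B : Set PermAny, B.Finite ∧ C = AvSet B) ∧
    (∀ A : Set PermAny, A ⊆ C →
      (∀ p ∈ A, ∀ q ∈ A, p ≠ q → ¬ ContainsPat p.2 q.2 ∧ ¬ ContainsPat q.2 p.2) →
      A.Finite) := by
  constructor
  · exact ⟨AA.Bas C, AA.bas_finite C hC hfin, AA.av_bas C hC⟩
  · intro A hAC hanti
    by_contra hinf
    rw [← Set.not_infinite, not_not] at hinf
    obtain e := hinf.natEmbedding
    obtain ⟨m, n, hmn, hcp⟩ := (AA.pwo_class C hC hfin).exists_lt (f := fun t => (e t : PermAny))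
      (fun t => hAC (e t).2)
    have hne : (e m : PermAny) ≠ (e n : PermAny) :=
      fun h => (by omega : m ≠ n) (e.injective (Subtype.ext h))
    exact (hanti _ (e m).2 _ (e n).2 hne).1 hcp
end

section
/- Let B be a set of permutations, π a permutation of length k, and j ∈ {1,…,k+1}. Let e_j ∈ ℕ^{k+1} be the vector whose j-th component is 1 and whose other components are 0. Then j ∈ J(π) (that is, Z(B;π;g) = ∅ for every gap vector g with g_j > 0) if and only if Z(B;π;e_j) = ∅. -/
set_option maxHeartbeats 1000000 in
/-- `j ∈ J(π)` if and only if `Z(B;π;e_j) = ∅`, where `e_j` is the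
gap vector whose `j`-th component is `1` and whose other components are `0`. -/
theorem mem_JSet_iff_ZSet_single_eq_empty
    (B : Set PermAny) {k : ℕ} (π : Equiv.Perm (Fin k)) (j : Fin (k + 1)) :
    j ∈ JSet B π ↔ ZSet B π (fun i => if i = j then 1 else 0) = ∅ := by
  constructor
  · intro hj
    exact hj _ (by simp)
  · intro hZ
    simp only [JSet, Set.mem_setOf_eq]
    intro g hg
    rw [Set.eq_empty_iff_forall_notMem]
    rintro p ⟨hpAv, hpPos⟩
    rw [Set.eq_empty_iff_forall_notMem] at hZ
    -- the length
    have hjk := j.isLt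
    -- prescribed positions
    set Q : ℕ → ℕ := fun r =>
      (∑ j' ∈ Finset.univ.filter fun j' : Fin (k+1) => (j' : ℕ) ≤ r, g j') + r with hQ
    have hQmono : StrictMono Q := by
      apply strictMono_nat_of_lt_succ
      intro r
      have hsub : (Finset.univ.filter fun j' : Fin (k+1) => (j':ℕ) ≤ r)
          ⊆ (Finset.univ.filter fun j' : Fin (k+1) => (j':ℕ) ≤ r+1) := by
        intro t ht
        simp only [Finset.mem_filter, Finset.mem_univ, true_and] at ht ⊢
        omega
      have := Finset.sum_le_sum_of_subset (f := g) hsub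
      simp only [hQ]
      omega
    have hQlt : ∀ r : ℕ, r < k → Q r < k + ∑ i, g i := by
      intro r hr
      have := Finset.sum_le_sum_of_subset (f := g)
        (Finset.filter_subset (fun j' : Fin (k+1) => (j':ℕ) ≤ r) Finset.univ)
      simp only [hQ]
      omega
    have hp : ∀ (r : Fin k) (h : Q ↑r < k + ∑ i, g i),
        (p ⟨Q ↑r, h⟩ : ℕ) = (π r : ℕ) := by
      intro r h
      exact hpPos r ⟨Q ↑r, h⟩ (by simp only [hQ])
    -- extra position inside gap j
    set x : ℕ := (∑ j' ∈ Finset.univ.filter fun j' : Fin (k+1) => (j':ℕ) < (j:ℕ), g j') + j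
      with hx
    have hins : (Finset.univ.filter fun j' : Fin (k+1) => (j':ℕ) ≤ (j:ℕ))
        = insert j (Finset.univ.filter fun j' : Fin (k+1) => (j':ℕ) < (j:ℕ)) := by
      ext t
      simp only [Finset.mem_filter, Finset.mem_univ, true_and, Finset.mem_insert, Fin.ext_iff]
      omega
    have hsumj : (∑ j' ∈ Finset.univ.filter fun j' : Fin (k+1) => (j':ℕ) < (j:ℕ), g j') + g j
        ≤ ∑ i, g i := by
      have h1 : (∑ j' ∈ Finset.univ.filter fun j' : Fin (k+1) => (j':ℕ) ≤ (j:ℕ), g j')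
          = g j + ∑ j' ∈ Finset.univ.filter fun j' : Fin (k+1) => (j':ℕ) < (j:ℕ), g j' := by
        rw [hins, Finset.sum_insert (by simp)]
      have h2 := Finset.sum_le_sum_of_subset (f := g)
        (Finset.filter_subset (fun j' : Fin (k+1) => (j':ℕ) ≤ (j:ℕ)) Finset.univ)
      omega
    have hxlt : x < k + ∑ i, g i := by
      simp only [hx]
      omega
    have hltx : ∀ r : ℕ, r < (j:ℕ) → Q r < x := by
      intro r hr
      have hsub : (Finset.univ.filter fun j' : Fin (k+1) => (j':ℕ) ≤ r)
          ⊆ (Finset.univ.filter fun j' : Fin (k+1) => (j':ℕ) < (j:ℕ)) := by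
        intro t ht
        simp only [Finset.mem_filter, Finset.mem_univ, true_and] at ht ⊢
        omega
      have := Finset.sum_le_sum_of_subset (f := g) hsub
      simp only [hQ, hx]
      omega
    have hxlt2 : ∀ r : ℕ, (j:ℕ) ≤ r → x < Q r := by
      intro r hr
      have hsub : (Finset.univ.filter fun j' : Fin (k+1) => (j':ℕ) ≤ (j:ℕ))
          ⊆ (Finset.univ.filter fun j' : Fin (k+1) => (j':ℕ) ≤ r) := by
        intro t ht
        simp only [Finset.mem_filter, Finset.mem_univ, true_and] at ht ⊢
        omega
      have h2 := Finset.sum_le_sum_of_subset (f := g) hsub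
      have h1 : (∑ j' ∈ Finset.univ.filter fun j' : Fin (k+1) => (j':ℕ) ≤ (j:ℕ), g j')
          = g j + ∑ j' ∈ Finset.univ.filter fun j' : Fin (k+1) => (j':ℕ) < (j:ℕ), g j' := by
        rw [hins, Finset.sum_insert (by simp)]
      simp only [hQ, hx]
      omega
    -- the value at x is large
    have hxval : k ≤ (p ⟨x, hxlt⟩ : ℕ) := by
      by_contra hc
      push_neg at hc
      set r : Fin k := π.symm ⟨_, hc⟩ with hr
      have hπr : (π r : ℕ) = (p ⟨x, hxlt⟩ : ℕ) := by
        rw [hr, Equiv.apply_symm_apply]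
      have h2 := hp r (hQlt _ r.isLt)
      have h3 : (⟨Q ↑r, hQlt _ r.isLt⟩ : Fin (k + ∑ i, g i)) = ⟨x, hxlt⟩ :=
        p.injective (Fin.ext (by omega))
      have hQx : Q ↑r = x := congrArg Fin.val h3
      rcases lt_or_ge (r:ℕ) (j:ℕ) with h | h
      · exact absurd hQx (Nat.ne_of_lt (hltx _ h))
      · exact absurd hQx (Nat.ne_of_gt (hxlt2 _ h))
    -- embedding of positions
    set N : ℕ → ℕ := fun a => if a < (j:ℕ) then Q a else if a = (j:ℕ) then x else Q (a-1)
      with hN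
    have hNlt : ∀ a : Fin (k+1), N ↑a < k + ∑ i, g i := by
      intro a
      have ha := a.isLt
      simp only [hN]
      split_ifs with h1 h2
      · exact hQlt _ (by omega)
      · exact hxlt
      · exact hQlt _ (by omega)
    set F : Fin (k+1) → Fin (k + ∑ i, g i) := fun a => ⟨N ↑a, hNlt a⟩ with hF
    have hFmono : StrictMono F := by
      intro a b hab
      have hab' : (a:ℕ) < (b:ℕ) := hab
      have ha := a.isLt
      have hb := b.isLt
      simp only [hF, Fin.mk_lt_mk, hN]
      split_ifs with h1 h2 h3 h4 h5 h6 h7 h8 <;>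
        first
          | omega
          | (exact hQmono (by omega))
          | (exact hltx _ (by omega))
          | (exact hxlt2 _ (by omega))
    -- the pattern of length k+1
    set q : Equiv.Perm (Fin (k+1)) :=
      ((finSuccEquiv' j).trans (Equiv.optionCongr π)).trans (finSuccEquiv' (Fin.last k)).symm
      with hq
    have hqj : q j = Fin.last k := by
      simp [hq, finSuccEquiv'_at, finSuccEquiv'_symm_none]
    have hqs : ∀ i : Fin k, q (j.succAbove i) = (π i).castSucc := by
      intro i
      simp [hq, finSuccEquiv'_succAbove, finSuccEquiv'_symm_some, Fin.succAbove_last]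
    have hpFj : k ≤ (p (F j) : ℕ) := by
      have hFj : F j = ⟨x, hxlt⟩ := Fin.ext (by simp [hF, hN])
      rw [hFj]
      exact hxval
    have hpFs : ∀ i : Fin k, (p (F (j.succAbove i)) : ℕ) = (π i : ℕ) := by
      intro i
      rcases lt_or_ge (Fin.castSucc i) j with h | h
      · rw [Fin.succAbove_of_castSucc_lt _ _ h]
        have hlt : (i:ℕ) < (j:ℕ) := h
        have hFi : F (Fin.castSucc i) = ⟨Q ↑i, hQlt _ i.isLt⟩ :=
          Fin.ext (by simp [hF, hN, hlt, not_le.mpr h])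
        rw [hFi]
        exact hp i _
      · rw [Fin.succAbove_of_le_castSucc _ _ h]
        have hle : (j:ℕ) ≤ (i:ℕ) := h
        have hNi : N ((i:ℕ)+1) = Q ↑i := by
          simp only [hN]
          rw [if_neg (by omega), if_neg (by omega)]
          simp
        have hFi : F i.succ = ⟨Q ↑i, hQlt _ i.isLt⟩ := by
          apply Fin.ext
          simp only [hF, Fin.val_succ]
          exact hNi
        rw [hFi]
        exact hp i _
    -- comparison transfer
    have hcmp : ∀ a b : Fin (k+1), q a < q b ↔ p (F a) < p (F b) := by
      have key : ∀ a : Fin (k+1),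
          (a = j ∧ (q a : ℕ) = k ∧ k ≤ (p (F a) : ℕ)) ∨
          ((q a : ℕ) < k ∧ (q a : ℕ) = (p (F a) : ℕ)) := by
        intro a
        rcases eq_or_ne a j with rfl | ha
        · exact Or.inl ⟨rfl, by rw [hqj]; rfl, hpFj⟩
        · obtain ⟨i, rfl⟩ := Fin.exists_succAbove_eq ha
          right
          have e2 : ((q (j.succAbove i)) : ℕ) = (π i : ℕ) := by rw [hqs i]; rfl
          exact ⟨by rw [e2]; exact (π i).isLt, by rw [e2, hpFs i]⟩
      intro a b
      rw [Fin.lt_iff_val_lt_val, Fin.lt_iff_val_lt_val]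
      rcases key a with ⟨rfl, h1, h2⟩ | ⟨h1, h2⟩ <;>
        rcases key b with ⟨hbj, h3, h4⟩ | ⟨h3, h4⟩
      · subst hbj
        omega
      · omega
      · omega
      · omega
    -- avoidance of q
    have hqAv : ∀ b ∈ B, ¬ ContainsPat b.2 q := by
      rintro b hb ⟨f, hf, hpat⟩
      exact hpAv b hb ⟨F ∘ f, hFmono.comp hf, fun a c => (hpat a c).trans (hcmp _ _)⟩
    -- transport to length k + ∑ e_j
    have hS : k + (∑ i : Fin (k+1), if i = j then 1 else 0) = k + 1 := by simp
    set e : Fin (k + ∑ i : Fin (k+1), if i = j then 1 else 0) ≃ Fin (k+1) := finCongr hS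
      with he
    set q' : Equiv.Perm (Fin (k + ∑ i : Fin (k+1), if i = j then 1 else 0)) :=
      e.symm.permCongr q with hq'
    have hev : ∀ a, ((e a : Fin (k+1)) : ℕ) = (a : ℕ) := by
      intro a
      simp [he]
    have hq'v : ∀ i, (q' i : ℕ) = (q (e i) : ℕ) := by
      intro i
      simp [hq', he, Equiv.permCongr_apply]
    refine hZ q' ⟨?_, ?_⟩
    · rintro b hb ⟨f, hf, hpat⟩
      refine hqAv b hb ⟨fun a => e (f a), ?_, ?_⟩
      · intro a c hac
        have h1 := hf hac
        rw [Fin.lt_iff_val_lt_val] at h1 ⊢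
        rw [hev, hev]
        exact h1
      · intro a c
        rw [hpat a c, Fin.lt_iff_val_lt_val, Fin.lt_iff_val_lt_val, hq'v, hq'v]
    · intro r i hi
      have hT : (∑ j' ∈ Finset.univ.filter fun j' : Fin (k+1) => (j':ℕ) ≤ (r:ℕ),
          if j' = j then (1:ℕ) else 0) = if (j:ℕ) ≤ (r:ℕ) then 1 else 0 := by
        rw [Finset.sum_ite_eq']
        simp
      rw [hT] at hi
      have hk := r.isLt
      have hqi : (q' i : ℕ) = (q (e i) : ℕ) := hq'v i
      have hei : ((e i : Fin (k+1)) : ℕ) = (i : ℕ) := hev i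
      rcases le_or_gt (j:ℕ) (r:ℕ) with h | h
      · rw [if_pos h] at hi
        have hsa : e i = j.succAbove r := by
          apply Fin.ext
          rw [Fin.succAbove_of_le_castSucc _ _ (by rw [Fin.le_def]; simpa using h)]
          rw [hei]
          simp only [Fin.val_succ]
          omega
        rw [hqi, hsa, hqs r]
        rfl
      · rw [if_neg (by omega)] at hi
        have hsa : e i = j.succAbove r := by
          apply Fin.ext
          rw [Fin.succAbove_of_castSucc_lt _ _ (by rw [Fin.lt_def]; simpa using h)]
          rw [hei]
          simp only [Fin.coe_castSucc]
          omega
        rw [hqi, hsa, hqs r]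
        rfl
end

section
/- Let B be a finite nonempty set of permutations and π a permutation of length k. The entry π(r) is ES-reducible for π with respect to B if and only if |Z(B;π;g)| = |Z(B;d_r(π);d_r(g))| for all gap vectors g ∈ ℕ^{k+1} that obey J(π) and satisfy ‖g‖ ≤ ‖B‖∞ − 1. -/
def insEntry {k : ℕ} (q : Equiv.Perm (Fin k)) (i v : Fin (k + 1)) : Equiv.Perm (Fin (k + 1)) :=
  (finSuccEquiv' i).trans ((Equiv.optionCongr q).trans (finSuccEquiv' v).symm)

lemma delEntry_succAbove {k : ℕ} (p : Equiv.Perm (Fin (k + 1))) (i : Fin (k + 1)) (a : Fin k) :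
    (p i).succAbove (delEntry p i a) = p (i.succAbove a) := by
  have h : ((finSuccEquiv' i).symm.trans (p.trans (finSuccEquiv' (p i)))) (some a)
      = some (delEntry p i a) := by
    refine (Equiv.removeNone_some _ ?_).symm
    refine ⟨(finSuccEquiv' (p i)) (p (i.succAbove a)) |>.get ?_, ?_⟩
    · rcases Option.eq_none_or_eq_some ((finSuccEquiv' (p i)) (p (i.succAbove a))) with h | ⟨y, h⟩
      · exfalso
        have h2 := congrArg (finSuccEquiv' (p i)).symm h
        simp only [Equiv.symm_apply_apply, finSuccEquiv'_symm_none] at h2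
        exact (Fin.succAbove_ne i a) (p.injective h2)
      · simp [h]
    · simp [Equiv.trans_apply, finSuccEquiv'_symm_some]
  have h2 : ((finSuccEquiv' i).symm.trans (p.trans (finSuccEquiv' (p i)))) (some a)
      = finSuccEquiv' (p i) (p (i.succAbove a)) := by
    simp [Equiv.trans_apply, finSuccEquiv'_symm_some]
  rw [h2] at h
  have h3 := congrArg (finSuccEquiv' (p i)).symm h
  simp only [Equiv.symm_apply_apply, finSuccEquiv'_symm_some] at h3
  exact h3.symm

lemma delEntry_lt_iff {k : ℕ} (p : Equiv.Perm (Fin (k + 1))) (i : Fin (k + 1)) (a b : Fin k) :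
    delEntry p i a < delEntry p i b ↔ p (i.succAbove a) < p (i.succAbove b) := by
  rw [← delEntry_succAbove p i a, ← delEntry_succAbove p i b,
    (Fin.strictMono_succAbove (p i)).lt_iff_lt]

lemma succAbove_coe {k : ℕ} (x : Fin (k + 1)) (y : Fin k) :
    ((x.succAbove y : Fin (k+1)) : ℕ) = if (y : ℕ) < (x : ℕ) then (y : ℕ) else (y : ℕ) + 1 := by
  rw [Fin.succAbove]
  split_ifs with h1 h2 h2 <;> simp_all [Fin.lt_def, Fin.castSucc, Fin.val_succ]

lemma succAbove_coe_det {k m : ℕ} {x z : Fin (k + 1)} {y : Fin k} {x' z' : Fin (m + 1)}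
    {y' : Fin m} (hx : (x : ℕ) = (x' : ℕ)) (hz : (z : ℕ) = (z' : ℕ))
    (h1 : x.succAbove y = z) (h2 : x'.succAbove y' = z') : (y : ℕ) = (y' : ℕ) := by
  have e1 := congrArg (Fin.val) h1
  have e2 := congrArg (Fin.val) h2
  rw [succAbove_coe] at e1 e2
  split_ifs at e1 e2 <;> omega

lemma insEntry_apply_self {k : ℕ} (q : Equiv.Perm (Fin k)) (i v : Fin (k + 1)) :
    insEntry q i v i = v := by
  simp [insEntry, Equiv.trans_apply, finSuccEquiv'_at, finSuccEquiv'_symm_none]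

lemma insEntry_apply_succAbove {k : ℕ} (q : Equiv.Perm (Fin k)) (i v : Fin (k + 1)) (a : Fin k) :
    insEntry q i v (i.succAbove a) = v.succAbove (q a) := by
  simp [insEntry, Equiv.trans_apply, finSuccEquiv'_succAbove, finSuccEquiv'_symm_some]

lemma delEntry_insEntry {k : ℕ} (q : Equiv.Perm (Fin k)) (i v : Fin (k + 1)) :
    delEntry (insEntry q i v) i = q := by
  ext a
  have h1 := delEntry_succAbove (insEntry q i v) i a
  rw [insEntry_apply_succAbove, insEntry_apply_self] at h1
  exact congrArg Fin.val ((Fin.strictMono_succAbove v).injective h1)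

lemma insEntry_delEntry {k : ℕ} (p : Equiv.Perm (Fin (k + 1))) (i : Fin (k + 1)) :
    insEntry (delEntry p i) i (p i) = p := by
  ext x
  rcases eq_or_ne x i with rfl | hx
  · rw [insEntry_apply_self]
  · obtain ⟨a, ha⟩ := Fin.exists_succAbove_eq hx
    rw [← ha, insEntry_apply_succAbove, delEntry_succAbove]

lemma containsPat_trans {m k n : ℕ} {b : Equiv.Perm (Fin m)} {c : Equiv.Perm (Fin k)}
    {p : Equiv.Perm (Fin n)} (h1 : ContainsPat b c) (h2 : ContainsPat c p) :
    ContainsPat b p := by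
  obtain ⟨f, hf, hfo⟩ := h1
  obtain ⟨g, hg, hgo⟩ := h2
  exact ⟨g ∘ f, hg.comp hf, fun a a' => (hfo a a').trans (hgo (f a) (f a'))⟩

lemma containsPat_delEntry_of_misses {m k : ℕ} {b : Equiv.Perm (Fin m)}
    {p : Equiv.Perm (Fin (k + 1))} {i : Fin (k + 1)} (f : Fin m → Fin (k + 1))
    (hf : StrictMono f) (hfo : ∀ a a' : Fin m, b a < b a' ↔ p (f a) < p (f a'))
    (hmiss : ∀ a, f a ≠ i) : ContainsPat b (delEntry p i) := by
  choose G hG using fun a => Fin.exists_succAbove_eq (hmiss a)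
  refine ⟨G, ?_, ?_⟩
  · intro a a' h
    have := hf h
    rw [← hG a, ← hG a', (Fin.strictMono_succAbove i).lt_iff_lt] at this
    exact this
  · intro a a'
    rw [hfo, ← hG a, ← hG a', ← delEntry_lt_iff]

lemma containsPat_delEntry {k : ℕ} (p : Equiv.Perm (Fin (k + 1))) (i : Fin (k + 1)) :
    ContainsPat (delEntry p i) p :=
  ⟨i.succAbove, Fin.strictMono_succAbove i, fun a a' => delEntry_lt_iff p i a a'⟩

lemma avSet_closed {B : Set PermAny} {n m : ℕ} {p : Equiv.Perm (Fin n)}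
    (hp : (⟨n, p⟩ : PermAny) ∈ AvSet B) {c : Equiv.Perm (Fin m)} (hc : ContainsPat c p) :
    (⟨m, c⟩ : PermAny) ∈ AvSet B :=
  fun b hb hcon => hp b hb (containsPat_trans hcon hc)

lemma containsPat_congr_right {m n n' : ℕ} (h : n = n') (b : Equiv.Perm (Fin m))
    (p : Equiv.Perm (Fin n)) :
    ContainsPat b ((finCongr h).permCongr p) ↔ ContainsPat b p := by
  subst h
  simp [Equiv.permCongr]

lemma avSet_congr {B : Set PermAny} {n n' : ℕ} (h : n = n') (p : Equiv.Perm (Fin n)) :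
    ((⟨n', (finCongr h).permCongr p⟩ : PermAny) ∈ AvSet B) ↔ (⟨n, p⟩ : PermAny) ∈ AvSet B := by
  subst h
  simp [Equiv.permCongr]

/-! ### natural-number sum layer -/

def Gm {m : ℕ} (g : Fin m → ℕ) : ℕ → ℕ := fun t => if h : t < m then g ⟨t, h⟩ else 0

lemma sum_univ_eq_Gm {m : ℕ} (g : Fin m → ℕ) :
    ∑ j, g j = ∑ j ∈ Finset.range m, Gm g j := by
  rw [Finset.sum_range fun j => Gm g j]
  refine Finset.sum_congr rfl fun j _ => ?_
  simp [Gm, j.isLt]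

lemma filter_sum_eq_Gm {m : ℕ} (g : Fin m → ℕ) (t : ℕ) :
    (∑ j ∈ Finset.univ.filter fun j : Fin m => (j : ℕ) ≤ t, g j)
      = ∑ j ∈ Finset.range (t + 1), Gm g j := by
  induction t with
  | zero =>
    rcases Nat.eq_zero_or_pos m with rfl | hm
    · simp [Gm]
    · rw [Finset.sum_range_one]
      have : (Finset.univ.filter fun j : Fin m => (j : ℕ) ≤ 0) = {⟨0, hm⟩} := by
        ext j; simp only [Finset.mem_filter, Finset.mem_univ, true_and, Finset.mem_singleton,
          Fin.ext_iff]; omega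
      rw [this, Finset.sum_singleton]
      simp [Gm, hm]
  | succ t ih =>
    rw [Finset.sum_range_succ, ← ih]
    rcases lt_or_ge (t + 1) m with h | h
    · have : (Finset.univ.filter fun j : Fin m => (j : ℕ) ≤ t + 1)
          = insert (⟨t + 1, h⟩ : Fin m) (Finset.univ.filter fun j : Fin m => (j : ℕ) ≤ t) := by
        ext j; simp [Fin.ext_iff]; omega
      rw [this, Finset.sum_insert (by simp)]
      simp [Gm, h]; ring
    · have h0 : Gm g (t + 1) = 0 := by simp [Gm]; omega
      have : (Finset.univ.filter fun j : Fin m => (j : ℕ) ≤ t + 1)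
          = (Finset.univ.filter fun j : Fin m => (j : ℕ) ≤ t) := by
        ext j; simp; omega
      rw [this, h0, Nat.add_zero]

lemma merge_sum (a : ℕ → ℕ) (r : ℕ) (t : ℕ) :
    ∑ j ∈ Finset.range t,
        (if j < r then a j else if j = r then a r + a (r + 1) else a (j + 1))
      = if t ≤ r then ∑ j ∈ Finset.range t, a j else ∑ j ∈ Finset.range (t + 1), a j := by
  induction t with
  | zero => simp
  | succ t ih =>
    rw [Finset.sum_range_succ, ih]
    rcases lt_trichotomy t r with h | rfl | h
    · simp only [if_pos h, if_pos (by omega : t + 1 ≤ r), if_pos (by omega : t ≤ r),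
        Finset.sum_range_succ]
    · rw [if_neg (lt_irrefl t), if_pos rfl, if_pos (le_refl t),
        if_neg (by omega : ¬ t + 1 ≤ t), Finset.sum_range_succ, Finset.sum_range_succ]
      ring
    · simp only [if_neg (by omega : ¬ t < r), if_neg (by omega : t ≠ r),
        if_neg (by omega : ¬ t + 1 ≤ r), if_neg (by omega : ¬ t ≤ r)]
      rw [Finset.sum_range_succ (n := t + 1)]

lemma Gm_delGap {k : ℕ} (g : Fin (k + 2) → ℕ) (r : Fin (k + 1)) (j : ℕ) :
    Gm (delGap g r) j = if j < (r : ℕ) then Gm g j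
      else if j = (r : ℕ) then Gm g (r : ℕ) + Gm g ((r : ℕ) + 1) else Gm g (j + 1) := by
  rcases lt_or_ge j (k + 1) with h | h
  · have hj1 : j + 1 < k + 2 := by omega
    have hr2 : (r : ℕ) < k + 2 := by omega
    have hr1 : (r : ℕ) + 1 < k + 2 := by omega
    have hj0 : j < k + 2 := by omega
    simp only [Gm, dif_pos h, dif_pos hj1, dif_pos hr2, dif_pos hr1, dif_pos hj0]
    rw [delGap]
    split_ifs with h1 h2
    · rfl
    · have e1 : Fin.castSucc (⟨j, h⟩ : Fin (k + 1)) = (⟨(r : ℕ), hr2⟩ : Fin (k + 2)) :=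
        Fin.ext h2
      have e2 : Fin.succ (⟨j, h⟩ : Fin (k + 1)) = (⟨(r : ℕ) + 1, hr1⟩ : Fin (k + 2)) :=
        Fin.ext (by simpa using h2)
      rw [e1, e2]
    · rfl
  · have hr : (r : ℕ) < k + 1 := r.isLt
    simp only [Gm, dif_neg (by omega : ¬ j < k + 1), dif_neg (by omega : ¬ j + 1 < k + 2)]
    rw [if_neg (by omega), if_neg (by omega)]

def SnG {m : ℕ} (g : Fin m → ℕ) (t : ℕ) : ℕ := ∑ j ∈ Finset.range (t + 1), Gm g j

lemma snG_mono {m : ℕ} (g : Fin m → ℕ) {t t' : ℕ} (h : t ≤ t') : SnG g t ≤ SnG g t' :=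
  Finset.sum_le_sum_of_subset (Finset.range_subset_range.2 (by omega))

lemma snG_le_sum {m : ℕ} (g : Fin m → ℕ) (t : ℕ) : SnG g t ≤ ∑ j, g j := by
  rw [sum_univ_eq_Gm]
  rcases le_total (t + 1) m with h | h
  · exact Finset.sum_le_sum_of_subset (Finset.range_subset_range.2 h)
  · exact le_of_eq (Finset.sum_subset (Finset.range_subset_range.2 h)
      (fun x _ hx => by simp only [Finset.mem_range, not_lt] at hx; simp [Gm]; omega)).symm

lemma sum_delGap {k : ℕ} (g : Fin (k + 2) → ℕ) (r : Fin (k + 1)) :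
    ∑ j, delGap g r j = ∑ j, g j := by
  rw [sum_univ_eq_Gm, sum_univ_eq_Gm]
  rw [Finset.sum_congr rfl fun j _ => Gm_delGap g r j, merge_sum]
  rw [if_neg (by have := r.isLt; omega)]

lemma snG_delGap {k : ℕ} (g : Fin (k + 2) → ℕ) (r : Fin (k + 1)) (t : ℕ) :
    SnG (delGap g r) t = if t < (r : ℕ) then SnG g t else SnG g (t + 1) := by
  unfold SnG
  rw [Finset.sum_congr rfl fun j _ => Gm_delGap g r j, merge_sum]
  split_ifs with h1 h2 h2 <;> first | rfl | omega

def Wp {K : ℕ} (π : Equiv.Perm (Fin K)) (g : Fin (K + 1) → ℕ) {M : ℕ}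
    (p : Equiv.Perm (Fin M)) : Prop :=
  ∀ r : Fin K, ∀ i : Fin M, (i : ℕ) = SnG g (r : ℕ) + (r : ℕ) → (p i : ℕ) = (π r : ℕ)

lemma zSet_eq (B : Set PermAny) {k : ℕ} (π : Equiv.Perm (Fin k)) (g : Fin (k + 1) → ℕ) :
    ZSet B π g = {p | (⟨k + ∑ j, g j, p⟩ : PermAny) ∈ AvSet B ∧ Wp π g p} := by
  unfold ZSet Wp SnG
  ext p
  simp only [Set.mem_setOf_eq, filter_sum_eq_Gm]

lemma wp_congr {K : ℕ} (π : Equiv.Perm (Fin K)) (g : Fin (K + 1) → ℕ) {M M' : ℕ}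
    (h : M = M') (p : Equiv.Perm (Fin M)) :
    Wp π g ((finCongr h).permCongr p) ↔ Wp π g p := by
  subst h
  simp [Equiv.permCongr, Wp]

lemma succAbove_coe_congr {k m : ℕ} {x : Fin (k + 1)} {y : Fin k} {x' : Fin (m + 1)}
    {y' : Fin m} (hx : (x : ℕ) = (x' : ℕ)) (hy : (y : ℕ) = (y' : ℕ)) :
    ((x.succAbove y : Fin (k + 1)) : ℕ) = ((x'.succAbove y' : Fin (m + 1)) : ℕ) := by
  rw [succAbove_coe, succAbove_coe, hx, hy]

lemma aux_eq {k : ℕ} (g : Fin (k + 2) → ℕ) (r : Fin (k + 1)) :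
    (k + 1) + ∑ j, g j = (k + ∑ j, delGap g r j) + 1 := by
  rw [sum_delGap]; omega

def posrF {k : ℕ} (g : Fin (k + 2) → ℕ) (r : Fin (k + 1)) :
    Fin ((k + ∑ j, delGap g r j) + 1) :=
  ⟨SnG g (r : ℕ) + (r : ℕ), by
    have h1 := snG_le_sum g (r : ℕ); have h2 := r.isLt; rw [sum_delGap]; omega⟩

def vrF {k : ℕ} (π : Equiv.Perm (Fin (k + 1))) (g : Fin (k + 2) → ℕ) (r : Fin (k + 1)) :
    Fin ((k + ∑ j, delGap g r j) + 1) :=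
  ⟨(π r : ℕ), by have := (π r).isLt; omega⟩

def phiF {k : ℕ} (π : Equiv.Perm (Fin (k + 1))) (r : Fin (k + 1)) (g : Fin (k + 2) → ℕ)
    (p : Equiv.Perm (Fin ((k + 1) + ∑ j, g j))) :
    Equiv.Perm (Fin (k + ∑ j, delGap g r j)) :=
  delEntry ((finCongr (aux_eq g r)).permCongr p) (posrF g r)

def psiF {k : ℕ} (π : Equiv.Perm (Fin (k + 1))) (r : Fin (k + 1)) (g : Fin (k + 2) → ℕ)
    (q : Equiv.Perm (Fin (k + ∑ j, delGap g r j))) :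
    Equiv.Perm (Fin ((k + 1) + ∑ j, g j)) :=
  (finCongr (aux_eq g r)).symm.permCongr (insEntry q (posrF g r) (vrF π g r))

lemma permCongr_coe {M M' : ℕ} (h : M = M') (p : Equiv.Perm (Fin M)) (x : Fin M') :
    (((finCongr h).permCongr p) x : ℕ) = (p (finCongr h.symm x) : ℕ) := by
  subst h; simp [Equiv.permCongr]

lemma wp_cast_val {k : ℕ} {π : Equiv.Perm (Fin (k + 1))} {g : Fin (k + 2) → ℕ}
    {p : Equiv.Perm (Fin ((k + 1) + ∑ j, g j))} (hp : Wp π g p) (r : Fin (k + 1))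
    (r'' : Fin (k + 1)) (x : Fin ((k + ∑ j, delGap g r j) + 1))
    (hx : (x : ℕ) = SnG g (r'' : ℕ) + (r'' : ℕ)) :
    (((finCongr (aux_eq g r)).permCongr p) x : ℕ) = (π r'' : ℕ) := by
  rw [permCongr_coe]
  exact hp r'' _ (by simpa using hx)

lemma wp_phi {k : ℕ} {π : Equiv.Perm (Fin (k + 1))} {r : Fin (k + 1)} {g : Fin (k + 2) → ℕ}
    {p : Equiv.Perm (Fin ((k + 1) + ∑ j, g j))} (hp : Wp π g p) :
    Wp (delEntry π r) (delGap g r) (phiF π r g p) := by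
  intro r' i hi
  set pc := (finCongr (aux_eq g r)).permCongr p with hpc
  have hposr : ((posrF g r : Fin ((k + ∑ j, delGap g r j) + 1)) : ℕ) = SnG g (r : ℕ) + (r : ℕ) :=
    rfl
  have key : (((posrF g r).succAbove i) : ℕ)
      = SnG g ((r.succAbove r' : Fin (k + 1)) : ℕ) + ((r.succAbove r' : Fin (k + 1)) : ℕ) := by
    rw [succAbove_coe, succAbove_coe, hposr, hi, snG_delGap]
    rcases lt_or_ge (r' : ℕ) (r : ℕ) with hc | hc
    · have hm : SnG g (r' : ℕ) ≤ SnG g (r : ℕ) := snG_mono g (by omega)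
      simp only [if_pos hc]
      rw [if_pos (by omega)]
    · have hm : SnG g (r : ℕ) ≤ SnG g ((r' : ℕ) + 1) := snG_mono g (by omega)
      simp only [if_neg (by omega : ¬ (r' : ℕ) < (r : ℕ))]
      rw [if_neg (by omega)]
      omega
  have hz := wp_cast_val hp r (r.succAbove r') ((posrF g r).succAbove i) key
  have hx := wp_cast_val hp r r (posrF g r) rfl
  exact succAbove_coe_det hx hz (delEntry_succAbove pc (posrF g r) i) (delEntry_succAbove π r r')

lemma psi_coe {k : ℕ} (π : Equiv.Perm (Fin (k + 1))) (r : Fin (k + 1)) (g : Fin (k + 2) → ℕ)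
    (q : Equiv.Perm (Fin (k + ∑ j, delGap g r j))) (i : Fin ((k + 1) + ∑ j, g j)) :
    ((psiF π r g q) i : ℕ)
      = ((insEntry q (posrF g r) (vrF π g r)) (finCongr (aux_eq g r) i) : ℕ) := by
  unfold psiF
  rw [finCongr_symm, permCongr_coe]

lemma wp_psi {k : ℕ} {π : Equiv.Perm (Fin (k + 1))} {r : Fin (k + 1)} {g : Fin (k + 2) → ℕ}
    {q : Equiv.Perm (Fin (k + ∑ j, delGap g r j))}
    (hq : Wp (delEntry π r) (delGap g r) q) : Wp π g (psiF π r g q) := by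
  intro r'' i hi
  rw [psi_coe]
  set x := finCongr (aux_eq g r) i with hx
  have hxc : (x : ℕ) = (i : ℕ) := by simp [hx]
  rcases eq_or_ne r'' r with heq | hne
  · have hxp : x = posrF g r := Fin.ext (by rw [hxc, hi, heq]; rfl)
    rw [hxp, insEntry_apply_self]
    show ((π r : Fin (k + 1)) : ℕ) = _
    rw [heq]
  · obtain ⟨r', hr'⟩ := Fin.exists_succAbove_eq hne
    have hb : SnG (delGap g r) (r' : ℕ) + (r' : ℕ) < k + ∑ j, delGap g r j := by
      have h1 := snG_le_sum (delGap g r) (r' : ℕ)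
      have h2 := r'.isLt
      omega
    have i' : Fin (k + ∑ j, delGap g r j) := ⟨SnG (delGap g r) (r' : ℕ) + (r' : ℕ), hb⟩
    have hsa : (posrF g r).succAbove (⟨SnG (delGap g r) (r' : ℕ) + (r' : ℕ), hb⟩ :
        Fin (k + ∑ j, delGap g r j)) = x := by
      apply Fin.ext
      rw [succAbove_coe, hxc, hi, ← hr']
      show (if SnG (delGap g r) (r' : ℕ) + (r' : ℕ) < SnG g (r : ℕ) + (r : ℕ)
          then SnG (delGap g r) (r' : ℕ) + (r' : ℕ)
          else SnG (delGap g r) (r' : ℕ) + (r' : ℕ) + 1)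
        = SnG g ((r.succAbove r' : Fin (k + 1)) : ℕ) + ((r.succAbove r' : Fin (k + 1)) : ℕ)
      rw [succAbove_coe r r', snG_delGap]
      rcases lt_or_ge (r' : ℕ) (r : ℕ) with hc | hc
      · have hm : SnG g (r' : ℕ) ≤ SnG g (r : ℕ) := snG_mono g (by omega)
        simp only [if_pos hc]
        rw [if_pos (by omega)]
      · have hm : SnG g (r : ℕ) ≤ SnG g ((r' : ℕ) + 1) := snG_mono g (by omega)
        simp only [if_neg (by omega : ¬ (r' : ℕ) < (r : ℕ))]
        rw [if_neg (by omega)]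
        omega
    rw [← hsa, insEntry_apply_succAbove]
    have hq' : (q ⟨SnG (delGap g r) (r' : ℕ) + (r' : ℕ), hb⟩ : ℕ)
        = ((delEntry π r) r' : ℕ) := hq r' _ rfl
    have hfin := succAbove_coe_congr (x := vrF π g r) (x' := π r)
      (y := q ⟨SnG (delGap g r) (r' : ℕ) + (r' : ℕ), hb⟩) (y' := (delEntry π r) r') rfl hq'
    rw [hfin]
    have h2 := congrArg Fin.val (delEntry_succAbove π r r')
    rw [h2, hr']

lemma psi_phi {k : ℕ} {π : Equiv.Perm (Fin (k + 1))} {r : Fin (k + 1)} {g : Fin (k + 2) → ℕ}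
    {p : Equiv.Perm (Fin ((k + 1) + ∑ j, g j))} (hp : Wp π g p) :
    psiF π r g (phiF π r g p) = p := by
  unfold psiF phiF
  have hv : vrF π g r = ((finCongr (aux_eq g r)).permCongr p) (posrF g r) :=
    Fin.ext (wp_cast_val hp r r (posrF g r) rfl).symm
  rw [hv, insEntry_delEntry, ← Equiv.permCongr_symm, Equiv.symm_apply_apply]

lemma phi_psi {k : ℕ} (π : Equiv.Perm (Fin (k + 1))) (r : Fin (k + 1)) (g : Fin (k + 2) → ℕ)
    (q : Equiv.Perm (Fin (k + ∑ j, delGap g r j))) :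
    phiF π r g (psiF π r g q) = q := by
  unfold psiF phiF
  rw [← Equiv.permCongr_symm, Equiv.apply_symm_apply, delEntry_insEntry]

lemma av_phi {B : Set PermAny} {k : ℕ} {π : Equiv.Perm (Fin (k + 1))} {r : Fin (k + 1)}
    {g : Fin (k + 2) → ℕ} {p : Equiv.Perm (Fin ((k + 1) + ∑ j, g j))}
    (hp : (⟨(k + 1) + ∑ j, g j, p⟩ : PermAny) ∈ AvSet B) :
    (⟨k + ∑ j, delGap g r j, phiF π r g p⟩ : PermAny) ∈ AvSet B := by
  have h1 : (⟨(k + ∑ j, delGap g r j) + 1, (finCongr (aux_eq g r)).permCongr p⟩ : PermAny)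
      ∈ AvSet B := (avSet_congr (aux_eq g r) p).2 hp
  exact avSet_closed h1 (containsPat_delEntry _ (posrF g r))

lemma ncard_eq_iff_psi_avoids (B : Set PermAny) {k : ℕ} (π : Equiv.Perm (Fin (k + 1)))
    (r : Fin (k + 1)) (g : Fin (k + 2) → ℕ) :
    (ZSet B π g).ncard = (ZSet B (delEntry π r) (delGap g r)).ncard ↔
      ∀ q ∈ ZSet B (delEntry π r) (delGap g r),
        (⟨(k + 1) + ∑ j, g j, psiF π r g q⟩ : PermAny) ∈ AvSet B := by
  have himg : phiF π r g '' (ZSet B π g) ⊆ ZSet B (delEntry π r) (delGap g r) := by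
    rintro _ ⟨p, hp, rfl⟩
    rw [zSet_eq] at hp ⊢
    exact ⟨av_phi hp.1, wp_phi hp.2⟩
  have hinj : Set.InjOn (phiF π r g) (ZSet B π g) := by
    intro p hp p' hp' h
    rw [zSet_eq] at hp hp'
    rw [← psi_phi hp.2, h, psi_phi hp'.2]
  have hcard : (phiF π r g '' (ZSet B π g)).ncard = (ZSet B π g).ncard :=
    Set.ncard_image_of_injOn hinj
  constructor
  · intro h q hq
    have heq : phiF π r g '' (ZSet B π g) = ZSet B (delEntry π r) (delGap g r) :=
      Set.eq_of_subset_of_ncard_le himg (by omega) (Set.toFinite _)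
    rw [← heq] at hq
    obtain ⟨p, hp, rfl⟩ := hq
    rw [zSet_eq] at hp
    rw [psi_phi hp.2]
    exact hp.1
  · intro h
    have heq : phiF π r g '' (ZSet B π g) = ZSet B (delEntry π r) (delGap g r) := by
      refine Set.Subset.antisymm himg fun q hq => ?_
      refine ⟨psiF π r g q, ?_, phi_psi π r g q⟩
      rw [zSet_eq]
      have hq' := hq
      rw [zSet_eq] at hq'
      exact ⟨h q hq, wp_psi hq'.2⟩
    rw [← heq, hcard]

lemma filter_downward_iff {n : ℕ} (P : Fin n → Prop) [DecidablePred P]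
    (hmono : ∀ a b : Fin n, a ≤ b → P b → P a) (x : Fin n) :
    P x ↔ (x : ℕ) < (Finset.univ.filter P).card := by
  constructor
  · intro hx
    have hsub : Finset.Iic x ⊆ Finset.univ.filter P := by
      intro y hy
      simp only [Finset.mem_Iic] at hy
      simp only [Finset.mem_filter, Finset.mem_univ, true_and]
      exact hmono y x hy hx
    have := Finset.card_le_card hsub
    rw [Fin.card_Iic] at this
    omega
  · intro hx
    by_contra hP
    have hsub : Finset.univ.filter P ⊆ Finset.Iio x := by
      intro y hy
      simp only [Finset.mem_filter, Finset.mem_univ, true_and] at hy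
      simp only [Finset.mem_Iio]
      by_contra hxy
      exact hP (hmono x y (le_of_not_gt hxy) hy)
    have := Finset.card_le_card hsub
    rw [Fin.card_Iio] at this
    omega

def gapIdx {k : ℕ} (g : Fin (k + 2) → ℕ) (i₀ : ℕ) : ℕ :=
  (Finset.univ.filter (fun r'' : Fin (k + 1) => SnG g (r'' : ℕ) + (r'' : ℕ) < i₀)).card

def gMinus {k : ℕ} (g : Fin (k + 2) → ℕ) (i₀ : ℕ) : Fin (k + 2) → ℕ :=
  fun j => if (j : ℕ) = gapIdx g i₀ then g j - 1 else g j

lemma gapIdx_iff {k : ℕ} (g : Fin (k + 2) → ℕ) (i₀ : ℕ) (r'' : Fin (k + 1)) :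
    SnG g (r'' : ℕ) + (r'' : ℕ) < i₀ ↔ (r'' : ℕ) < gapIdx g i₀ := by
  exact filter_downward_iff (fun r'' : Fin (k + 1) => SnG g (r'' : ℕ) + (r'' : ℕ) < i₀)
    (fun a b hab hb => by
      have h1 := snG_mono g (Fin.le_def.1 hab)
      have h2 := Fin.le_def.1 hab
      omega) r''

lemma gapIdx_le {k : ℕ} (g : Fin (k + 2) → ℕ) (i₀ : ℕ) : gapIdx g i₀ ≤ k + 1 := by
  have h := Finset.card_filter_le Finset.univ
    (fun r'' : Fin (k + 1) => SnG g (r'' : ℕ) + (r'' : ℕ) < i₀)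
  simpa [gapIdx] using h

lemma Gm_single_le {m : ℕ} (g : Fin m → ℕ) {j s : ℕ} (h : j < s) :
    Gm g j ≤ ∑ x ∈ Finset.range s, Gm g x :=
  Finset.single_le_sum (fun _ _ => Nat.zero_le _) (Finset.mem_range.2 h)

lemma snG_succ {m : ℕ} (g : Fin m → ℕ) (t : ℕ) :
    SnG g (t + 1) = SnG g t + Gm g (t + 1) := Finset.sum_range_succ _ _

lemma sum_eq_snG_top {k : ℕ} (g : Fin (k + 2) → ℕ) : ∑ j, g j = SnG g (k + 1) := by
  rw [sum_univ_eq_Gm]; rfl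

lemma Gm_gapIdx_pos {k : ℕ} (g : Fin (k + 2) → ℕ) {i₀ : ℕ}
    (hns : ∀ r'' : Fin (k + 1), i₀ ≠ SnG g (r'' : ℕ) + (r'' : ℕ))
    (hlt : i₀ < (k + 1) + ∑ j, g j) : 1 ≤ Gm g (gapIdx g i₀) := by
  have hle : gapIdx g i₀ ≤ k + 1 := gapIdx_le g i₀
  rcases Nat.eq_zero_or_pos (gapIdx g i₀) with h0 | hpos
  · have h2 : ¬ SnG g 0 + 0 < i₀ := by
      intro hcon
      have := (gapIdx_iff g i₀ ⟨0, by omega⟩).1 hcon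
      omega
    have h3 : i₀ ≠ SnG g 0 + 0 := hns ⟨0, by omega⟩
    have h4 : SnG g 0 = Gm g 0 := by unfold SnG; exact Finset.sum_range_one _
    have e0 : Gm g (gapIdx g i₀) = Gm g 0 := by rw [h0]
    omega
  · have hj1 : gapIdx g i₀ - 1 < k + 1 := by omega
    have hlo : SnG g (gapIdx g i₀ - 1) + (gapIdx g i₀ - 1) < i₀ :=
      (gapIdx_iff g i₀ ⟨gapIdx g i₀ - 1, hj1⟩).2 (by show gapIdx g i₀ - 1 < gapIdx g i₀; omega)
    have hstep : SnG g (gapIdx g i₀ - 1 + 1)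
        = SnG g (gapIdx g i₀ - 1) + Gm g (gapIdx g i₀ - 1 + 1) := snG_succ g _
    have hidx : gapIdx g i₀ - 1 + 1 = gapIdx g i₀ := by omega
    rw [hidx] at hstep
    rcases Nat.lt_or_ge (gapIdx g i₀) (k + 1) with hk | hk
    · have hhi : ¬ SnG g (gapIdx g i₀) + gapIdx g i₀ < i₀ := by
        intro hcon
        have h5 : gapIdx g i₀ < gapIdx g i₀ := (gapIdx_iff g i₀ ⟨gapIdx g i₀, hk⟩).1 hcon
        omega
      have hne : i₀ ≠ SnG g (gapIdx g i₀) + gapIdx g i₀ := hns ⟨gapIdx g i₀, hk⟩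
      omega
    · have hj : gapIdx g i₀ = k + 1 := by omega
      have htop := sum_eq_snG_top g
      have e1 : SnG g (gapIdx g i₀) = SnG g (k + 1) := by rw [hj]
      omega

lemma minus_sum (a : ℕ → ℕ) (j₀ : ℕ) (ha : 1 ≤ a j₀) (m : ℕ) :
    ∑ j ∈ Finset.range m, (if j = j₀ then a j - 1 else a j)
      = (∑ j ∈ Finset.range m, a j) - (if j₀ < m then 1 else 0) := by
  induction m with
  | zero => simp
  | succ t ih =>
    rw [Finset.sum_range_succ, Finset.sum_range_succ, ih]
    rcases Nat.lt_trichotomy j₀ t with h | h | h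
    · have hs : a j₀ ≤ ∑ j ∈ Finset.range t, a j :=
        Finset.single_le_sum (fun _ _ => Nat.zero_le _) (Finset.mem_range.2 h)
      rw [if_neg (by omega : t ≠ j₀), if_pos h, if_pos (by omega)]
      omega
    · rw [if_pos h.symm, if_neg (by omega), if_pos (by omega)]
      subst h
      omega
    · rw [if_neg (by omega : t ≠ j₀), if_neg (by omega : ¬ j₀ < t), if_neg (by omega)]
      omega

lemma Gm_gMinus {k : ℕ} (g : Fin (k + 2) → ℕ) (i₀ : ℕ) (j : ℕ) :
    Gm (gMinus g i₀) j = if j = gapIdx g i₀ then Gm g j - 1 else Gm g j := by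
  rcases lt_or_ge j (k + 2) with h | h
  · simp only [Gm, dif_pos h]
    rw [gMinus]
  · simp only [Gm, dif_neg (by omega : ¬ j < k + 2)]
    split_ifs <;> rfl

lemma snG_gMinus {k : ℕ} (g : Fin (k + 2) → ℕ) {i₀ : ℕ}
    (hns : ∀ r'' : Fin (k + 1), i₀ ≠ SnG g (r'' : ℕ) + (r'' : ℕ))
    (hlt : i₀ < (k + 1) + ∑ j, g j) (t : ℕ) :
    SnG (gMinus g i₀) t = SnG g t - (if gapIdx g i₀ < t + 1 then 1 else 0) := by
  unfold SnG
  rw [Finset.sum_congr rfl fun j _ => Gm_gMinus g i₀ j,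
    minus_sum (Gm g) _ (Gm_gapIdx_pos g hns hlt)]

lemma snG_ge_one {k : ℕ} (g : Fin (k + 2) → ℕ) {i₀ : ℕ}
    (hns : ∀ r'' : Fin (k + 1), i₀ ≠ SnG g (r'' : ℕ) + (r'' : ℕ))
    (hlt : i₀ < (k + 1) + ∑ j, g j) {t : ℕ} (ht : gapIdx g i₀ ≤ t) : 1 ≤ SnG g t := by
  have h1 := Gm_gapIdx_pos g hns hlt
  have h2 : Gm g (gapIdx g i₀) ≤ SnG g t := Gm_single_le g (by omega)
  omega

lemma sum_gMinus {k : ℕ} (g : Fin (k + 2) → ℕ) {i₀ : ℕ}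
    (hns : ∀ r'' : Fin (k + 1), i₀ ≠ SnG g (r'' : ℕ) + (r'' : ℕ))
    (hlt : i₀ < (k + 1) + ∑ j, g j) :
    ∑ j, gMinus g i₀ j = (∑ j, g j) - 1 ∧ 1 ≤ ∑ j, g j := by
  have hidx : gapIdx g i₀ < k + 2 := by have := gapIdx_le g i₀; omega
  have h1 : ∑ j, gMinus g i₀ j = SnG (gMinus g i₀) (k + 1) := sum_eq_snG_top _
  have h2 := sum_eq_snG_top g
  have h3 := snG_gMinus g hns hlt (k + 1)
  have h4 := snG_ge_one g hns hlt (by omega : gapIdx g i₀ ≤ k + 1)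
  rw [if_pos (by omega)] at h3
  omega

lemma gMinus_le {k : ℕ} (g : Fin (k + 2) → ℕ) (i₀ : ℕ) (j : Fin (k + 2)) :
    gMinus g i₀ j ≤ g j := by
  rw [gMinus]
  split_ifs <;> omega

lemma posTransfer {k : ℕ} (g : Fin (k + 2) → ℕ) {i₀ : ℕ}
    (hns : ∀ r'' : Fin (k + 1), i₀ ≠ SnG g (r'' : ℕ) + (r'' : ℕ))
    (hlt : i₀ < (k + 1) + ∑ j, g j)
    {M : ℕ} (i₀m : Fin (M + 1)) (hi₀m : (i₀m : ℕ) = i₀) (r'' : Fin (k + 1)) (x : Fin M)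
    (hx : (x : ℕ) = SnG (gMinus g i₀) (r'' : ℕ) + (r'' : ℕ)) :
    ((i₀m.succAbove x : Fin (M + 1)) : ℕ) = SnG g (r'' : ℕ) + (r'' : ℕ) := by
  rw [succAbove_coe, hi₀m, hx, snG_gMinus g hns hlt]
  rcases Nat.lt_or_ge (r'' : ℕ) (gapIdx g i₀) with hc | hc
  · have hp : SnG g (r'' : ℕ) + (r'' : ℕ) < i₀ := (gapIdx_iff g i₀ r'').2 hc
    rw [if_neg (show ¬ gapIdx g i₀ < (r'' : ℕ) + 1 by omega)]
    rw [if_pos (show SnG g (r'' : ℕ) - 0 + (r'' : ℕ) < i₀ by omega)]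
    omega
  · have hp : ¬ SnG g (r'' : ℕ) + (r'' : ℕ) < i₀ := fun hcon => by
      have := (gapIdx_iff g i₀ r'').1 hcon
      omega
    have hne := hns r''
    have h1 := snG_ge_one g hns hlt hc
    rw [if_pos (show gapIdx g i₀ < (r'' : ℕ) + 1 by omega)]
    rw [if_neg (show ¬ SnG g (r'' : ℕ) - 1 + (r'' : ℕ) < i₀ by omega)]
    omega

lemma wp_small_val {k M : ℕ} {π : Equiv.Perm (Fin (k + 1))} {g : Fin (k + 2) → ℕ}
    {p : Equiv.Perm (Fin M)} (hp : Wp π g p) (hMe : M = (k + 1) + ∑ j, g j) {i : Fin M}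
    (h : (p i : ℕ) < k + 1) : ∃ r'' : Fin (k + 1), (i : ℕ) = SnG g (r'' : ℕ) + (r'' : ℕ) := by
  set r₀ := π.symm ⟨p i, h⟩ with hr₀
  have hb : SnG g (r₀ : ℕ) + (r₀ : ℕ) < M := by
    have h1 := snG_le_sum g (r₀ : ℕ)
    have h2 := r₀.isLt
    omega
  have hval : (p ⟨SnG g (r₀ : ℕ) + (r₀ : ℕ), hb⟩ : ℕ) = (π r₀ : ℕ) := hp r₀ _ rfl
  have hπ : (π r₀ : ℕ) = (p i : ℕ) := by rw [hr₀, Equiv.apply_symm_apply]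
  have : p ⟨SnG g (r₀ : ℕ) + (r₀ : ℕ), hb⟩ = p i := Fin.ext (by omega)
  have hxi := p.injective this
  exact ⟨r₀, by rw [← hxi]⟩

lemma wp_delEntry_gap {k M : ℕ} {π : Equiv.Perm (Fin (k + 1))} {g : Fin (k + 2) → ℕ}
    {p : Equiv.Perm (Fin (M + 1))} (hp : Wp π g p) (hMe : M + 1 = (k + 1) + ∑ j, g j)
    {i₀ : Fin (M + 1)} (hns : ∀ r'' : Fin (k + 1), (i₀ : ℕ) ≠ SnG g (r'' : ℕ) + (r'' : ℕ)) :
    Wp π (gMinus g (i₀ : ℕ)) (delEntry p i₀) := by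
  have hlt : (i₀ : ℕ) < (k + 1) + ∑ j, g j := hMe ▸ i₀.isLt
  intro r'' i hi
  have hpos := posTransfer g hns hlt i₀ rfl r'' i hi
  have hval : (p (i₀.succAbove i) : ℕ) = (π r'' : ℕ) := hp r'' _ hpos
  have hbig : ¬ (p i₀ : ℕ) < k + 1 := fun hsm => by
    obtain ⟨r₀, hr₀⟩ := wp_small_val hp hMe hsm
    exact hns r₀ hr₀
  have hd := congrArg Fin.val (delEntry_succAbove p i₀ i)
  rw [succAbove_coe] at hd
  have hπ : (π r'' : ℕ) < k + 1 := (π r'').isLt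
  split_ifs at hd <;> omega

lemma chain_lemma {n : ℕ} (p : Equiv.Perm (Fin (n + 2))) (i₀ : Fin (n + 2))
    (posr' : Fin (n + 1)) :
    ContainsPat (delEntry (delEntry p i₀) posr') (delEntry p (i₀.succAbove posr')) := by
  apply containsPat_delEntry_of_misses (f := fun a => i₀.succAbove (posr'.succAbove a))
  · exact (Fin.strictMono_succAbove i₀).comp (Fin.strictMono_succAbove posr')
  · intro a a'
    rw [delEntry_lt_iff, delEntry_lt_iff]
  · intro a
    exact fun h => Fin.succAbove_ne posr' a ((Fin.strictMono_succAbove i₀).injective h)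

lemma delEntry_coe_eq {n n' : ℕ} (h : n = n') {P : Equiv.Perm (Fin (n + 1))}
    {P' : Equiv.Perm (Fin (n' + 1))}
    (hco : ∀ x : Fin (n + 1), (P x : ℕ) = (P' (finCongr (by omega) x) : ℕ))
    {i : Fin (n + 1)} {i' : Fin (n' + 1)} (hi : (i : ℕ) = (i' : ℕ)) :
    delEntry P' i' = (finCongr h).permCongr (delEntry P i) := by
  subst h
  have hP : P' = P := by
    apply Equiv.ext
    intro x
    have := hco x
    simp only [finCongr_refl, Equiv.refl_apply] at this
    exact Fin.ext this.symm
  have hii : i' = i := Fin.ext hi.symm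
  subst hP hii
  apply Equiv.ext
  intro x
  simp [Equiv.permCongr]

lemma containsPat_delEntry_of_misses_cast {m A n : ℕ} {b : Equiv.Perm (Fin m)}
    {p : Equiv.Perm (Fin A)} (h : A = n + 1) (f : Fin m → Fin A) (hf : StrictMono f)
    (hfo : ∀ a a' : Fin m, b a < b a' ↔ p (f a) < p (f a')) (i : Fin (n + 1))
    (hmiss : ∀ a, ((f a : ℕ)) ≠ (i : ℕ)) :
    ContainsPat b (delEntry ((finCongr h).permCongr p) i) := by
  apply containsPat_delEntry_of_misses (f := fun a => finCongr h (f a))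
  · intro a a' hlt
    have := hf hlt
    rw [Fin.lt_def] at this ⊢
    simpa using this
  · intro a a'
    have he : ∀ y : Fin m, ((finCongr h).permCongr p) (finCongr h (f y)) = finCongr h (p (f y)) := by
      intro y
      simp [Equiv.permCongr]
    rw [he, he, hfo]
    rw [Fin.lt_def, Fin.lt_def]
    simp
  · intro a heq
    exact hmiss a (by rw [← heq]; simp)

lemma exists_unprescribed {k : ℕ} (g : Fin (k + 2) → ℕ) {M : ℕ}
    (hM : M = (k + 1) + ∑ j, g j) {m : ℕ} (f : Fin m → Fin M) (hf : Function.Injective f)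
    (hm : m ≤ ∑ j, g j) :
    (∃ i₀ : Fin M, (∀ r'' : Fin (k + 1), (i₀ : ℕ) ≠ SnG g (r'' : ℕ) + (r'' : ℕ))
        ∧ ∀ a, f a ≠ i₀)
      ∨ (∀ a, ∀ r'' : Fin (k + 1), (f a : ℕ) ≠ SnG g (r'' : ℕ) + (r'' : ℕ)) := by
  classical
  by_cases hA : ∃ i₀ : Fin M, (∀ r'' : Fin (k + 1), (i₀ : ℕ) ≠ SnG g (r'' : ℕ) + (r'' : ℕ))
      ∧ ∀ a, f a ≠ i₀
  · exact Or.inl hA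
  · right
    push_neg at hA
    -- every unprescribed position is in the image of f
    set NP := Finset.univ.filter
      (fun i : Fin M => ∀ r'' : Fin (k + 1), (i : ℕ) ≠ SnG g (r'' : ℕ) + (r'' : ℕ)) with hNP
    have hsub : NP ⊆ Finset.univ.image f := by
      intro i hi
      simp only [hNP, Finset.mem_filter, Finset.mem_univ, true_and] at hi
      obtain ⟨a, ha⟩ := hA i hi
      exact Finset.mem_image.2 ⟨a, Finset.mem_univ a, ha⟩
    -- prescribed positions form a set of size k+1
    have hposinj : Function.Injective (fun r'' : Fin (k + 1) =>
        (⟨SnG g (r'' : ℕ) + (r'' : ℕ), by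
          have h1 := snG_le_sum g (r'' : ℕ); have h2 := r''.isLt; omega⟩ : Fin M)) := by
      intro a b hab
      have hab' := congrArg Fin.val hab
      simp only at hab'
      rcases Nat.lt_trichotomy (a : ℕ) (b : ℕ) with hc | hc | hc
      · have := snG_mono g (by omega : (a : ℕ) ≤ (b : ℕ)); omega
      · exact Fin.ext hc
      · have := snG_mono g (by omega : (b : ℕ) ≤ (a : ℕ)); omega
    have hPcard : (Finset.univ.filter
        (fun i : Fin M => ¬ ∀ r'' : Fin (k + 1), (i : ℕ) ≠ SnG g (r'' : ℕ) + (r'' : ℕ))).card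
        = k + 1 := by
      have : Finset.univ.filter
          (fun i : Fin M => ¬ ∀ r'' : Fin (k + 1), (i : ℕ) ≠ SnG g (r'' : ℕ) + (r'' : ℕ))
          = Finset.univ.image (fun r'' : Fin (k + 1) =>
            (⟨SnG g (r'' : ℕ) + (r'' : ℕ), by
              have h1 := snG_le_sum g (r'' : ℕ); have h2 := r''.isLt; omega⟩ : Fin M)) := by
        ext i
        simp only [Finset.mem_filter, Finset.mem_univ, true_and, Finset.mem_image, not_forall,
          not_ne_iff]
        constructor
        · rintro ⟨r'', hr''⟩
          exact ⟨r'', Fin.ext hr''.symm⟩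
        · rintro ⟨r'', rfl⟩
          exact ⟨r'', rfl⟩
      rw [this, Finset.card_image_of_injective _ hposinj, Finset.card_univ, Fintype.card_fin]
    have hNPcard : NP.card = ∑ j, g j := by
      have htot := Finset.card_filter_add_card_filter_not
        (s := (Finset.univ : Finset (Fin M)))
        (p := fun i : Fin M => ∀ r'' : Fin (k + 1), (i : ℕ) ≠ SnG g (r'' : ℕ) + (r'' : ℕ))
      rw [Finset.card_univ, Fintype.card_fin] at htot
      rw [hNP]
      omega
    have himcard : (Finset.univ.image f).card ≤ m := by
      calc (Finset.univ.image f).card ≤ (Finset.univ : Finset (Fin m)).card :=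
            Finset.card_image_le
        _ = m := by rw [Finset.card_univ, Fintype.card_fin]
    have heq : NP = Finset.univ.image f :=
      Finset.eq_of_subset_of_card_le hsub (by omega)
    intro a r''
    have hmem : f a ∈ NP := by
      rw [heq]
      exact Finset.mem_image.2 ⟨a, Finset.mem_univ a, rfl⟩
    simp only [hNP, Finset.mem_filter, Finset.mem_univ, true_and] at hmem
    exact hmem r''

set_option maxHeartbeats 4000000 in
/-- For a finite nonempty basis `B` with maximum length `N = ‖B‖∞`,
the entry `π r` is ES-reducible if and only if `|Z(B;π;g)| = |Z(B;d_r(π);d_r(g))|`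
for all gap vectors `g` that obey `J(π)` and satisfy `‖g‖ ≤ ‖B‖∞ − 1`. -/
theorem esRed_iff_small_gap_vectors
    (B : Set PermAny) (hBfin : B.Finite) (hBne : B.Nonempty)
    (N : ℕ) (hN : IsGreatest ((fun p : PermAny => p.1) '' B) N)
    {k : ℕ} (π : Equiv.Perm (Fin (k + 1))) (r : Fin (k + 1)) :
    ESRed B π r ↔
      ∀ g : Fin (k + 2) → ℕ, (∀ j ∈ JSet B π, g j = 0) → (∑ j, g j) ≤ N - 1 →
        (ZSet B π g).ncard = (ZSet B (delEntry π r) (delGap g r)).ncard := by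
  constructor
  · intro h g hJ _
    exact h g hJ
  · intro hsmall
    intro g₀ hJ₀
    suffices H : ∀ s : ℕ, ∀ g : Fin (k + 2) → ℕ, (∀ j ∈ JSet B π, g j = 0) → ∑ j, g j = s →
        (ZSet B π g).ncard = (ZSet B (delEntry π r) (delGap g r)).ncard by
      exact H (∑ j, g₀ j) g₀ hJ₀ rfl
    intro s
    induction s using Nat.strong_induction_on with
    | _ s IH =>
    intro g hJ hs
    by_cases hsm : ∑ j, g j ≤ N - 1
    · exact hsmall g hJ hsm
    rw [ncard_eq_iff_psi_avoids]
    intro q hq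
    by_contra hnav
    simp only [AvSet, Set.mem_setOf_eq, not_forall] at hnav
    obtain ⟨b, hb, hcon⟩ := hnav
    rw [not_not] at hcon
    have hqZ := hq
    rw [zSet_eq] at hqZ
    have hp : Wp π g (psiF π r g q) := wp_psi hqZ.2
    have hphip : phiF π r g (psiF π r g q) = q := phi_psi π r g q
    obtain ⟨f, hfmono, hfo⟩ := hcon
    have hmN : b.1 ≤ N := hN.2 ⟨b, hb, rfl⟩
    have hmle : b.1 ≤ ∑ j, g j := by omega
    rcases exists_unprescribed g rfl f hfmono.injective hmle with ⟨i₀, hi₀ns, hi₀f⟩ | hcase2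
    · -- case A : delete an unused unprescribed entry and use the induction hypothesis
      have hlt : (i₀ : ℕ) < (k + 1) + ∑ j, g j := i₀.isLt
      obtain ⟨hsum1, hsum2⟩ := sum_gMinus g hi₀ns hlt
      have e2' : (k + 1) + ∑ j, g j = ((k + ∑ j, gMinus g (i₀ : ℕ) j) + 1) + 1 := by omega
      set pm := (finCongr e2').permCongr (psiF π r g q) with hpm
      set i₀m := finCongr e2' i₀ with hi₀mdef
      have hi₀mc : (i₀m : ℕ) = (i₀ : ℕ) := by simp [hi₀mdef]
      have hpmW : Wp π g pm := (wp_congr π g e2' _).2 hp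
      have hi₀ns' : ∀ r'' : Fin (k + 1), (i₀m : ℕ) ≠ SnG g (r'' : ℕ) + (r'' : ℕ) := by
        rw [hi₀mc]; exact hi₀ns
      have hpminus : Wp π (gMinus g (i₀ : ℕ)) (delEntry pm i₀m) := by
        have h1 := wp_delEntry_gap hpmW (by omega) hi₀ns'
        rw [hi₀mc] at h1
        exact h1
      have hV : (k + ∑ j, gMinus g (i₀ : ℕ) j) + 1 = (k + 1) + ∑ j, gMinus g (i₀ : ℕ) j := by
        omega
      set p2 := (finCongr hV).permCongr (delEntry pm i₀m) with hp2
      have hp2W : Wp π (gMinus g (i₀ : ℕ)) p2 := (wp_congr π _ hV _).2 hpminus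
      have hgmJ : ∀ j ∈ JSet B π, gMinus g (i₀ : ℕ) j = 0 := fun j hj => by
        have h1 := gMinus_le g (i₀ : ℕ) j
        have h2 := hJ j hj
        omega
      have hIH : (ZSet B π (gMinus g (i₀ : ℕ))).ncard
          = (ZSet B (delEntry π r) (delGap (gMinus g (i₀ : ℕ)) r)).ncard :=
        IH (s - 1) (by omega) (gMinus g (i₀ : ℕ)) hgmJ (by omega)
      rw [ncard_eq_iff_psi_avoids] at hIH
      have hbposr' : SnG (gMinus g (i₀ : ℕ)) (r : ℕ) + (r : ℕ)
          < (k + ∑ j, gMinus g (i₀ : ℕ) j) + 1 := by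
        have h1 := snG_le_sum (gMinus g (i₀ : ℕ)) (r : ℕ)
        have h2 := r.isLt
        omega
      set posr' : Fin ((k + ∑ j, gMinus g (i₀ : ℕ) j) + 1) :=
        ⟨SnG (gMinus g (i₀ : ℕ)) (r : ℕ) + (r : ℕ), hbposr'⟩ with hposr'def
      have hposrm : ((i₀m.succAbove posr') : ℕ) = SnG g (r : ℕ) + (r : ℕ) :=
        posTransfer g hi₀ns hlt i₀m hi₀mc r posr' rfl
      have hchain : ContainsPat (delEntry (delEntry pm i₀m) posr')
          (delEntry pm (i₀m.succAbove posr')) := chain_lemma pm i₀m posr'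
      have hWC : (k + ∑ j, gMinus g (i₀ : ℕ) j) + 1 = k + ∑ j, delGap g r j := by
        rw [sum_delGap]; omega
      have hco : ∀ x : Fin (((k + ∑ j, gMinus g (i₀ : ℕ) j) + 1) + 1),
          (pm x : ℕ) = (((finCongr (aux_eq g r)).permCongr (psiF π r g q))
            (finCongr (by omega) x) : ℕ) := by
        intro x
        rw [hpm, permCongr_coe, permCongr_coe]
        have harg : finCongr e2'.symm x
            = finCongr (aux_eq g r).symm (finCongr (by omega :
                ((k + ∑ j, gMinus g (i₀ : ℕ) j) + 1) + 1 = (k + ∑ j, delGap g r j) + 1) x) :=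
          Fin.ext (by simp)
        rw [harg]
      have hqeq : delEntry ((finCongr (aux_eq g r)).permCongr (psiF π r g q)) (posrF g r)
          = (finCongr hWC).permCongr (delEntry pm (i₀m.succAbove posr')) :=
        delEntry_coe_eq hWC hco (by exact hposrm)
      have hcont_q : ContainsPat (delEntry (delEntry pm i₀m) posr') q := by
        rw [← hphip]
        show ContainsPat _ (delEntry ((finCongr (aux_eq g r)).permCongr (psiF π r g q))
          (posrF g r))
        rw [hqeq, containsPat_congr_right]
        exact hchain
      have hAvdel : (⟨k + ∑ j, gMinus g (i₀ : ℕ) j, delEntry (delEntry pm i₀m) posr'⟩ : PermAny)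
          ∈ AvSet B := avSet_closed hqZ.1 hcont_q
      have hW2 : k + ∑ j, gMinus g (i₀ : ℕ) j = k + ∑ j, delGap (gMinus g (i₀ : ℕ)) r j := by
        rw [sum_delGap]
      have hco2 : ∀ x : Fin ((k + ∑ j, gMinus g (i₀ : ℕ) j) + 1),
          ((delEntry pm i₀m) x : ℕ) = (((finCongr (aux_eq (gMinus g (i₀ : ℕ)) r)).permCongr p2)
            (finCongr (by omega) x) : ℕ) := by
        intro x
        rw [permCongr_coe, hp2, permCongr_coe]
        have harg : finCongr hV.symm (finCongr (aux_eq (gMinus g (i₀ : ℕ)) r).symm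
            (finCongr (by omega : (k + ∑ j, gMinus g (i₀ : ℕ) j) + 1
              = (k + ∑ j, delGap (gMinus g (i₀ : ℕ)) r j) + 1) x)) = x :=
          Fin.ext (by simp)
        rw [harg]
      have hq2eq : phiF π r (gMinus g (i₀ : ℕ)) p2
          = (finCongr hW2).permCongr (delEntry (delEntry pm i₀m) posr') := by
        show delEntry ((finCongr (aux_eq (gMinus g (i₀ : ℕ)) r)).permCongr p2)
          (posrF (gMinus g (i₀ : ℕ)) r) = _
        exact delEntry_coe_eq hW2 (fun x => (hco2 x).symm) rfl
      have hq2Av : (⟨k + ∑ j, delGap (gMinus g (i₀ : ℕ)) r j,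
          phiF π r (gMinus g (i₀ : ℕ)) p2⟩ : PermAny) ∈ AvSet B := by
        rw [hq2eq]
        exact (avSet_congr hW2 _).2 hAvdel
      have hq2Z : phiF π r (gMinus g (i₀ : ℕ)) p2
          ∈ ZSet B (delEntry π r) (delGap (gMinus g (i₀ : ℕ)) r) := by
        rw [zSet_eq]
        exact ⟨hq2Av, wp_phi hp2W⟩
      have hpsiAv := hIH _ hq2Z
      rw [psi_phi hp2W] at hpsiAv
      have hcontp2 : ContainsPat b.2 p2 := by
        have h1 : ContainsPat b.2 (delEntry pm i₀m) := by
          rw [hpm]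
          exact containsPat_delEntry_of_misses_cast e2' f hfmono hfo i₀m
            (fun a h => hi₀f a (Fin.ext (by rw [hi₀mc] at h; exact h)))
        rw [hp2, containsPat_congr_right]
        exact h1
      exact hpsiAv b hb hcontp2
    · -- case B : the occurrence misses every prescribed position, so q contains b
      have hcontq : ContainsPat b.2 q := by
        rw [← hphip]
        show ContainsPat b.2 (delEntry ((finCongr (aux_eq g r)).permCongr (psiF π r g q))
          (posrF g r))
        exact containsPat_delEntry_of_misses_cast (aux_eq g r) f hfmono hfo (posrF g r)
          (fun a => hcase2 a r)
      exact hqZ.1 b hb hcontq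
end
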